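/- arXiv:1102.3136 — 7 statements merged into one kernel-verified Lean document; each statement's English description precedes it below -/
import Mathlib

section
/- All M roots of the fundamental polynomial of Lagrange reconstruction α_{R,ℓ} are real and distinct; more precisely, for each n ∈ {-M₋,...,M₊} \ {ℓ} there exists exactly one root of α_{R,ℓ} in the open interval (n - 1/2, n + 1/2), and α_{R,ℓ} has no other roots (real or complex). -/
open intervalIntegral Polynomial

/-- Lagrange interpolation basis polynomial for node `l` on the integer nodes `{a,…,b}`. -/
noncomputable def lagrangeBasis (a b l : ℤ) : Polynomial ℝ :=
  ∏ k ∈ (Finset.Icc a b).erase l,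
    Polynomial.C (((l : ℝ) - (k : ℝ))⁻¹) * (Polynomial.X - Polynomial.C (k : ℝ))

/-- all `M` roots of the fundamental polynomial of Lagrange reconstruction
`α_{R,l}` are real and distinct: for each node `n ≠ l` of the stencil there is exactly one
root in `(n - 1/2, n + 1/2)`, and `α_{R,l}` has no other roots, real or complex. -/
theorem reconstruction_fundamental_roots (Mm Mp l : ℤ)
    (hM : 0 ≤ Mm + Mp) (hl : l ∈ Finset.Icc (-Mm) Mp)
    (αR : Polynomial ℝ) (hdeg : αR.degree ≤ ((Mm + Mp).toNat : ℕ))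
    (hint : ∀ ξ : ℝ, (∫ η in (ξ - 1 / 2)..(ξ + 1 / 2), αR.eval η)
      = (lagrangeBasis (-Mm) Mp l).eval ξ) :
    (∀ n ∈ (Finset.Icc (-Mm) Mp).erase l,
        ∃! ξ : ℝ, ξ ∈ Set.Ioo ((n : ℝ) - 1 / 2) ((n : ℝ) + 1 / 2) ∧ αR.eval ξ = 0) ∧
    (∀ z : ℂ, Polynomial.aeval z αR = 0 →
        ∃ n ∈ (Finset.Icc (-Mm) Mp).erase l,
          ∃ ξ ∈ Set.Ioo ((n : ℝ) - 1 / 2) ((n : ℝ) + 1 / 2),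
            z = (ξ : ℂ) ∧ αR.eval ξ = 0) := by
  classical
  set S : Finset ℤ := (Finset.Icc (-Mm) Mp).erase l with hS
  set M : ℕ := (Mm + Mp).toNat with hMdef
  -- cardinality of the stencil minus the node l
  have hcard : S.card = M := by
    rw [hS, Finset.card_erase_of_mem hl, Int.card_Icc]
    simp only [hMdef]
    omega
  -- the Lagrange basis vanishes at other nodes
  have hIzero : ∀ n ∈ S, (lagrangeBasis (-Mm) Mp l).eval (n : ℝ) = 0 := by
    intro n hn
    unfold lagrangeBasis
    rw [Polynomial.eval_prod]
    exact Finset.prod_eq_zero hn (by simp)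
  -- the Lagrange basis equals 1 at l
  have hIone : (lagrangeBasis (-Mm) Mp l).eval (l : ℝ) = 1 := by
    unfold lagrangeBasis
    rw [Polynomial.eval_prod]
    apply Finset.prod_eq_one
    intro k hk
    have hkl : k ≠ l := Finset.ne_of_mem_erase hk
    have : ((l : ℝ) - (k : ℝ)) ≠ 0 :=
      sub_ne_zero.mpr (by exact_mod_cast hkl.symm)
    simp [inv_mul_cancel₀ this]
  -- αR is nonzero
  have hne : αR ≠ 0 := by
    intro h
    have := hint (l : ℝ)
    rw [h] at this
    simp [hIone] at this
  -- disjointness of the intervals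
  have hdisj : ∀ (n m : ℤ) (ξ : ℝ), ξ ∈ Set.Ioo ((n : ℝ) - 1 / 2) ((n : ℝ) + 1 / 2) →
      ξ ∈ Set.Ioo ((m : ℝ) - 1 / 2) ((m : ℝ) + 1 / 2) → n = m := by
    intro n m ξ h1 h2
    obtain ⟨a1, a2⟩ := h1
    obtain ⟨b1, b2⟩ := h2
    have h3 : (n : ℝ) < m + 1 := by linarith
    have h4 : (m : ℝ) < n + 1 := by linarith
    have h3' : n < m + 1 := by exact_mod_cast h3
    have h4' : m < n + 1 := by exact_mod_cast h4
    omega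
  -- Rolle: a root in each interval
  have hroot : ∀ n ∈ S, ∃ ξ : ℝ,
      ξ ∈ Set.Ioo ((n : ℝ) - 1 / 2) ((n : ℝ) + 1 / 2) ∧ αR.eval ξ = 0 := by
    intro n hn
    have hc : Continuous fun x : ℝ => αR.eval x := αR.continuous
    set F : ℝ → ℝ := fun u => ∫ x in ((n : ℝ) - 1 / 2)..u, αR.eval x with hF
    have hderiv : ∀ x : ℝ, HasDerivAt F (αR.eval x) x := fun x =>
      (hc.integral_hasStrictDerivAt ((n : ℝ) - 1 / 2) x).hasDerivAt
    have hFa : F ((n : ℝ) - 1 / 2) = 0 := by simp [hF]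
    have hFb : F ((n : ℝ) + 1 / 2) = 0 := by
      rw [hF]
      simp only
      rw [hint (n : ℝ), hIzero n hn]
    have hlt : (n : ℝ) - 1 / 2 < (n : ℝ) + 1 / 2 := by linarith
    have hcont : ContinuousOn F (Set.Icc ((n : ℝ) - 1 / 2) ((n : ℝ) + 1 / 2)) :=
      fun x _ => ((hderiv x).continuousAt).continuousWithinAt
    obtain ⟨c, hc1, hc2⟩ := exists_hasDerivAt_eq_zero hlt hcont (hFa.trans hFb.symm)
      (fun x _ => hderiv x)
    exact ⟨c, hc1, hc2⟩
  choose! f hf1 hf2 using hroot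
  -- the image of f
  have hinj : Set.InjOn f S := by
    intro n hn m hm h
    exact hdisj n m (f n) (hf1 n hn) (h ▸ hf1 m hm)
  set T : Finset ℝ := S.image f with hT
  have hTcard : T.card = M := by
    rw [hT, Finset.card_image_of_injOn hinj, hcard]
  have hTsub : T ⊆ αR.roots.toFinset := by
    intro x hx
    obtain ⟨n, hn, rfl⟩ := Finset.mem_image.mp hx
    rw [Multiset.mem_toFinset, Polynomial.mem_roots hne]
    exact hf2 n hn
  have hnatdeg : αR.natDegree ≤ M := Polynomial.natDegree_le_iff_degree_le.mpr hdeg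
  have hrc : αR.roots.card ≤ M := (Polynomial.card_roots' αR).trans hnatdeg
  have htf : αR.roots.toFinset.card ≤ αR.roots.card := Multiset.toFinset_card_le _
  have hTeq : T = αR.roots.toFinset := by
    apply Finset.eq_of_subset_of_card_le hTsub
    omega
  have hrcM : αR.roots.card = M := by
    have := Finset.card_le_card hTsub
    omega
  -- every real root lies in T
  have hmemT : ∀ ξ : ℝ, αR.eval ξ = 0 → ∃ n ∈ S, f n = ξ := by
    intro ξ hξ
    have : ξ ∈ αR.roots.toFinset := by
      rw [Multiset.mem_toFinset, Polynomial.mem_roots hne]; exact hξ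
    rw [← hTeq, hT] at this
    exact Finset.mem_image.mp this
  constructor
  · intro n hn
    refine ⟨f n, ⟨hf1 n hn, hf2 n hn⟩, ?_⟩
    rintro y ⟨hy1, hy2⟩
    obtain ⟨m, hm, rfl⟩ := hmemT y hy2
    have : m = n := hdisj m n (f m) (hf1 m hm) hy1
    rw [this]
  · intro z hz
    have hmapne : αR.map (algebraMap ℝ ℂ) ≠ 0 :=
      (Polynomial.map_ne_zero_iff (algebraMap ℝ ℂ).injective).mpr hne
    have hzroot : z ∈ (αR.map (algebraMap ℝ ℂ)).roots := by
      rw [Polynomial.mem_roots hmapne, Polynomial.IsRoot, Polynomial.eval_map]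
      rw [Polynomial.aeval_def] at hz
      exact hz
    have hndM : αR.natDegree = M := le_antisymm hnatdeg (hrcM ▸ Polynomial.card_roots' αR)
    have hrm : αR.roots.map (algebraMap ℝ ℂ) = (αR.map (algebraMap ℝ ℂ)).roots :=
      Polynomial.roots_map_of_injective_of_card_eq_natDegree (algebraMap ℝ ℂ).injective
        (by rw [hrcM, hndM])
    rw [← hrm] at hzroot
    obtain ⟨ξ, hξ, rfl⟩ := Multiset.mem_map.mp hzroot
    have hξ0 : αR.eval ξ = 0 := (Polynomial.mem_roots hne).mp hξ
    obtain ⟨n, hn, rfl⟩ := hmemT ξ hξ0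
    exact ⟨n, hn, f n, hf1 n hn, rfl, hf2 n hn⟩
end

section
/- No root of the fundamental polynomial of Lagrange reconstruction α_{R,ℓ} lies at a half-integer: if α_{R,ℓ}(ξ) = 0 then ξ ≠ n + 1/2 for every integer n. -/
open intervalIntegral Polynomial

/-- no root of the fundamental polynomial of Lagrange reconstruction lies at
a half-integer: if `α_{R,l}(ξ) = 0` then `ξ ≠ n + 1/2` for every integer `n`. -/
theorem reconstruction_fundamental_no_half_integer_root (Mm Mp l : ℤ)
    (hM : 0 ≤ Mm + Mp) (hl : l ∈ Finset.Icc (-Mm) Mp)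
    (αR : Polynomial ℝ) (hdeg : αR.degree ≤ ((Mm + Mp).toNat : ℕ))
    (hint : ∀ ξ : ℝ, (∫ η in (ξ - 1 / 2)..(ξ + 1 / 2), αR.eval η)
      = (lagrangeBasis (-Mm) Mp l).eval ξ) :
    ∀ ξ : ℝ, αR.eval ξ = 0 → ∀ n : ℤ, ξ ≠ (n : ℝ) + 1 / 2 := by
  intro ξ hξ n hξn
  subst hξn
  -- αR is nonzero
  have hcont : Continuous fun x : ℝ => αR.eval x := αR.continuous
  have hαR0 : αR ≠ 0 := by
    intro h0
    have h := hint l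
    rw [h0] at h
    simp only [eval_zero, intervalIntegral.integral_zero] at h
    have : (lagrangeBasis (-Mm) Mp l).eval (l : ℝ) = 1 := by
      rw [lagrangeBasis, eval_prod]
      apply Finset.prod_eq_one
      intro k hk
      have hkl : k ≠ l := (Finset.mem_erase.mp hk).1
      have : ((l : ℝ) - (k : ℝ)) ≠ 0 := by
        intro hc
        apply hkl
        have : (k : ℝ) = (l : ℝ) := by linarith
        exact_mod_cast this
      simp [inv_mul_cancel₀ this]
    rw [this] at h
    exact one_ne_zero h.symm
  -- antiderivative
  set S : ℝ → ℝ := fun x => ∫ t in (0:ℝ)..x, αR.eval t with hS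
  have hderiv : ∀ x : ℝ, HasDerivAt S (αR.eval x) x := fun x =>
    intervalIntegral.integral_hasDerivAt_right (hcont.intervalIntegrable _ _)
      (hcont.stronglyMeasurableAtFilter _ _) hcont.continuousAt
  -- for each m in the stencil other than l, lagrangeBasis evaluates to 0 at m
  have heval0 : ∀ m ∈ (Finset.Icc (-Mm) Mp).erase l,
      (lagrangeBasis (-Mm) Mp l).eval (m : ℝ) = 0 := by
    intro m hm
    rw [lagrangeBasis, eval_prod]
    refine Finset.prod_eq_zero hm ?_
    simp
  -- S agrees at m - 1/2 and m + 1/2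
  have hSeq : ∀ m ∈ (Finset.Icc (-Mm) Mp).erase l,
      S ((m : ℝ) - 1 / 2) = S ((m : ℝ) + 1 / 2) := by
    intro m hm
    have h1 : S ((m : ℝ) + 1 / 2) - S ((m : ℝ) - 1 / 2)
        = ∫ t in ((m : ℝ) - 1 / 2)..((m : ℝ) + 1 / 2), αR.eval t := by
      rw [hS]
      rw [intervalIntegral.integral_interval_sub_left (hcont.intervalIntegrable _ _)
        (hcont.intervalIntegrable _ _)]
    rw [hint m, heval0 m hm] at h1
    linarith
  -- Rolle roots
  have hroot : ∀ m ∈ (Finset.Icc (-Mm) Mp).erase l,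
      ∃ c ∈ Set.Ioo ((m : ℝ) - 1 / 2) ((m : ℝ) + 1 / 2), αR.eval c = 0 := by
    intro m hm
    have hab : (m : ℝ) - 1 / 2 < (m : ℝ) + 1 / 2 := by linarith
    exact exists_hasDerivAt_eq_zero hab
      (fun x _ => (hderiv x).continuousAt.continuousWithinAt) (hSeq m hm)
      (fun x _ => hderiv x)
  classical
  choose! r hr1 hr2 using hroot
  -- root finset
  set T := (Finset.Icc (-Mm) Mp).erase l with hT
  have hinj : Set.InjOn r T := by
    intro a ha b hb hab
    have h1 := hr1 a ha
    have h2 := hr1 b hb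
    rw [hab] at h1
    obtain ⟨ha1, ha2⟩ := h1
    obtain ⟨hb1, hb2⟩ := h2
    have h1' : ((-1:ℤ):ℝ) < ((a - b : ℤ):ℝ) := by push_cast; linarith
    have h2' : ((a - b : ℤ):ℝ) < ((1:ℤ):ℝ) := by push_cast; linarith
    have g1 : (-1:ℤ) < a - b := by exact_mod_cast h1'
    have g2 : (a - b : ℤ) < 1 := by exact_mod_cast h2'
    omega
  have hnotmem : ((n : ℝ) + 1 / 2) ∉ T.image r := by
    intro hmem
    obtain ⟨m, hm, hrm⟩ := Finset.mem_image.mp hmem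
    obtain ⟨h1, h2⟩ := hr1 m hm
    rw [hrm] at h1 h2
    have : (m : ℝ) - 1 < (n : ℝ) := by linarith
    have : (n : ℝ) < (m : ℝ) := by linarith
    have hlt : m - 1 < n := by exact_mod_cast ‹(m : ℝ) - 1 < (n : ℝ)›
    have hgt : n < m := by exact_mod_cast ‹(n : ℝ) < (m : ℝ)›
    omega
  -- cardinality count
  have hcardT : T.card = (Mm + Mp).toNat := by
    rw [hT, Finset.card_erase_of_mem hl, Int.card_Icc]
    omega
  have hcard : (Mm + Mp).toNat + 1 = (insert ((n : ℝ) + 1 / 2) (T.image r)).card := by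
    rw [Finset.card_insert_of_notMem hnotmem, Finset.card_image_of_injOn hinj, hcardT]
  have hzero : αR = 0 := by
    apply Polynomial.eq_zero_of_natDegree_lt_card_of_eval_eq_zero' αR
      (insert ((n : ℝ) + 1 / 2) (T.image r))
    · intro x hx
      rcases Finset.mem_insert.mp hx with h | h
      · rw [h]; exact hξ
      · obtain ⟨m, hm, hrm⟩ := Finset.mem_image.mp h
        rw [← hrm]; exact hr2 m hm
    · rw [← hcard]
      have : αR.natDegree ≤ (Mm + Mp).toNat := Polynomial.natDegree_le_iff_degree_le.mpr hdeg
      omega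
  exact hαR0 hzero
end

section
/- The fundamental polynomial of Lagrange reconstruction factorizes as α_{R,ℓ}(ξ) = (-1)^{ℓ+M₊} (1/M!) C(M, ℓ+M₋) ∏_{n ∈ {-M₋,...,M₊}, n≠ℓ} (ξ - ξ_{ℓ,n}), where ξ_{ℓ,n} ∈ (n-1/2, n+1/2) are its M real roots. -/
open intervalIntegral Polynomial

section Helpers

lemma weno_nat_prod_lemma (i N : ℕ) (h : i ≤ N) :
    ∏ j ∈ (Finset.range (N+1)).erase i, ((i:ℝ) - j)
      = (-1)^(N-i) * i.factorial * (N-i).factorial := by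
  have hsplit : (Finset.range (N+1)).erase i
      = Finset.range i ∪ Finset.Ico (i+1) (N+1) := by
    ext j
    simp only [Finset.mem_erase, Finset.mem_range, Finset.mem_union, Finset.mem_Ico]
    omega
  have hdisj : Disjoint (Finset.range i) (Finset.Ico (i+1) (N+1)) := by
    simp only [Finset.disjoint_left, Finset.mem_range, Finset.mem_Ico]
    omega
  rw [hsplit, Finset.prod_union hdisj]
  have h1 : ∏ j ∈ Finset.range i, ((i:ℝ) - j) = i.factorial := by
    rw [← Finset.prod_range_reflect (fun j => ((i:ℝ) - j)) i]
    have hco : ∀ j ∈ Finset.range i, ((i:ℝ) - (i - 1 - j : ℕ)) = ((j:ℝ) + 1) := by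
      intro j hj
      rw [Finset.mem_range] at hj
      have he : (i - 1 - j : ℕ) = i - (j+1) := by omega
      rw [he, Nat.cast_sub (by omega)]
      push_cast; ring
    rw [Finset.prod_congr rfl hco]
    exact_mod_cast congrArg (Nat.cast (R := ℝ)) (Finset.prod_range_add_one_eq_factorial i)
  have h2 : ∏ j ∈ Finset.Ico (i+1) (N+1), ((i:ℝ) - j)
      = (-1)^(N-i) * (N-i).factorial := by
    rw [Finset.prod_Ico_eq_prod_range]
    have hc : N + 1 - (i+1) = N - i := by omega
    rw [hc]
    have hco : ∀ j ∈ Finset.range (N-i), ((i:ℝ) - (i + 1 + j : ℕ)) = (-1) * ((j:ℝ) + 1) := by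
      intro j hj; push_cast; ring
    rw [Finset.prod_congr rfl hco, Finset.prod_mul_distrib, Finset.prod_const,
      Finset.card_range]
    norm_cast
    rw [Finset.prod_range_add_one_eq_factorial]
  rw [h1, h2]; ring

lemma weno_int_prod_lemma (a b l : ℤ) (hl : l ∈ Finset.Icc a b) :
    ∏ k ∈ (Finset.Icc a b).erase l, ((l:ℝ) - k)
      = (-1)^((b-l).toNat) * ((l-a).toNat).factorial * ((b-l).toNat).factorial := by
  rw [Finset.mem_Icc] at hl
  have hab : a ≤ b := le_trans hl.1 hl.2
  set N := (b - a).toNat with hN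
  set i := (l - a).toNat with hi
  have hiN : i ≤ N := by omega
  have key : ∏ k ∈ (Finset.Icc a b).erase l, ((l:ℝ) - k)
      = ∏ j ∈ (Finset.range (N+1)).erase i, ((i:ℝ) - j) := by
    refine Finset.prod_nbij' (fun k => (k - a).toNat) (fun j => a + j) ?_ ?_ ?_ ?_ ?_
    · intro k hk
      simp only [Finset.mem_erase, Finset.mem_Icc] at hk
      simp only [Finset.mem_erase, Finset.mem_range]
      omega
    · intro j hj
      simp only [Finset.mem_erase, Finset.mem_range] at hj
      simp only [Finset.mem_erase, Finset.mem_Icc]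
      omega
    · intro k hk
      simp only [Finset.mem_erase, Finset.mem_Icc] at hk
      omega
    · intro j hj
      simp only [Finset.mem_erase, Finset.mem_range] at hj
      omega
    · intro k hk
      simp only [Finset.mem_erase, Finset.mem_Icc] at hk
      have h1 : (((k - a).toNat : ℤ) : ℝ) = (k:ℝ) - a := by
        push_cast [Int.toNat_of_nonneg (by omega : (0:ℤ) ≤ k - a)]; ring
      have h2 : ((i : ℤ) : ℝ) = (l:ℝ) - a := by
        push_cast [hi, Int.toNat_of_nonneg (by omega : (0:ℤ) ≤ l - a)]; ring
      push_cast at h1 h2 ⊢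
      rw [h1, h2]; ring
  have hNi : N - i = (b-l).toNat := by omega
  rw [key, weno_nat_prod_lemma i N hiN, hNi]

noncomputable def wenoAntider (P : Polynomial ℝ) : Polynomial ℝ :=
  P.sum fun n a => C (a / (n+1)) * X^(n+1)

lemma wenoAntider_deriv (P : Polynomial ℝ) : derivative (wenoAntider P) = P := by
  unfold wenoAntider
  rw [Polynomial.sum_def, derivative_sum]
  conv_rhs => rw [← Polynomial.sum_C_mul_X_pow_eq P, Polynomial.sum_def]
  refine Finset.sum_congr rfl fun n _ => ?_
  rw [derivative_C_mul_X_pow]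
  have : ((n:ℝ) + 1) ≠ 0 := by positivity
  rw [Nat.add_sub_cancel]
  push_cast
  rw [div_mul_cancel₀ _ this]

lemma wenoAntider_natDegree_le (P : Polynomial ℝ) (M : ℕ) (hP : P.degree ≤ M) :
    (wenoAntider P).natDegree ≤ M + 1 := by
  unfold wenoAntider
  rw [Polynomial.sum_def]
  refine Polynomial.natDegree_sum_le_of_forall_le _ _ fun n hn => ?_
  have hn' : n ≤ M := by
    have := Polynomial.le_degree_of_mem_supp n hn
    have := le_trans this hP
    exact_mod_cast this
  refine le_trans (natDegree_C_mul_le _ _) ?_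
  rw [natDegree_X_pow]
  omega

lemma wenoAntider_coeff_top (P : Polynomial ℝ) (M : ℕ) :
    (wenoAntider P).coeff (M+1) = P.coeff M / (M+1) := by
  unfold wenoAntider
  rw [Polynomial.sum_def, Polynomial.finset_sum_coeff]
  simp only [Polynomial.coeff_C_mul, Polynomial.coeff_X_pow]
  rw [Finset.sum_eq_single M]
  · simp
  · intro n _ hne
    have hc : ¬(M + 1 = n + 1) := by omega
    simp [hc, Ne.symm hne]
  · intro hM
    simp [Polynomial.notMem_support_iff.mp hM]

lemma weno_coeff_of_integral (M : ℕ) (P L : Polynomial ℝ) (hP : P.degree ≤ M)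
    (h : ∀ ξ : ℝ, (∫ η in (ξ - 1/2)..(ξ + 1/2), P.eval η) = L.eval ξ) :
    L.coeff M = P.coeff M := by
  obtain ⟨F, hFd, hFdeg, hFc⟩ : ∃ F : Polynomial ℝ, derivative F = P ∧
      F.natDegree ≤ M + 1 ∧ F.coeff (M+1) = P.coeff M / (M+1) :=
    ⟨wenoAntider P, wenoAntider_deriv P, wenoAntider_natDegree_le P M hP,
      wenoAntider_coeff_top P M⟩
  have hQL : (taylor (1/2 : ℝ) F : Polynomial ℝ) - taylor (-(1/2) : ℝ) F = L := by
    apply Polynomial.funext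
    intro ξ
    rw [Polynomial.eval_sub, taylor_apply, taylor_apply, Polynomial.eval_comp,
      Polynomial.eval_comp]
    simp only [Polynomial.eval_add, Polynomial.eval_X, Polynomial.eval_C]
    rw [← h ξ]
    have hftc : ∫ η in (ξ - 1/2)..(ξ + 1/2), P.eval η
        = F.eval (ξ + 1/2) - F.eval (ξ - 1/2) := by
      refine intervalIntegral.integral_eq_sub_of_hasDerivAt
        (f := fun x => F.eval x) (f' := fun x => P.eval x) (fun x _ => ?_)
        ((Polynomial.continuous P).intervalIntegrable _ _)
      have := F.hasDerivAt x
      rwa [hFd] at this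
    rw [hftc]
    ring_nf
  have hc : L.coeff M = (hasseDeriv M F).eval (1/2) - (hasseDeriv M F).eval (-(1/2)) := by
    rw [← hQL, Polynomial.coeff_sub, Polynomial.taylor_coeff, Polynomial.taylor_coeff]
  set G := hasseDeriv M F with hG
  have hGdeg : G.natDegree < 2 := by
    have h1 := Polynomial.natDegree_hasseDeriv_le F M
    have h2 : F.natDegree ≤ M + 1 := hFdeg
    rw [← hG] at h1
    omega
  have heval : ∀ x : ℝ, G.eval x = G.coeff 0 + G.coeff 1 * x := by
    intro x
    rw [Polynomial.eval_eq_sum_range' hGdeg]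
    simp [Finset.sum_range_succ]
  rw [hc, heval, heval]
  have hG1 : G.coeff 1 = (M+1) * F.coeff (M+1) := by
    rw [hG, Polynomial.hasseDeriv_coeff]
    have h1M : 1 + M = M + 1 := by omega
    rw [h1M, Nat.choose_succ_self_right]
    push_cast; ring
  rw [hG1, hFc]
  have : ((M:ℝ) + 1) ≠ 0 := by positivity
  field_simp
  ring

end Helpers

/-- factorization of the fundamental polynomial of Lagrange reconstruction:
`α_{R,l}(ξ) = (-1)^(l+M₊)·(1/M!)·C(M, l+M₋)·∏_{n ≠ l} (ξ - ξ_{l,n})` where `ξ_{l,n}` is the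
root of `α_{R,l}` in `(n - 1/2, n + 1/2)`. -/
theorem reconstruction_fundamental_factorization (Mm Mp l : ℤ)
    (hM : 0 ≤ Mm + Mp) (hl : l ∈ Finset.Icc (-Mm) Mp)
    (αR : Polynomial ℝ) (hdeg : αR.degree ≤ ((Mm + Mp).toNat : ℕ))
    (hint : ∀ ξ : ℝ, (∫ η in (ξ - 1 / 2)..(ξ + 1 / 2), αR.eval η)
      = (lagrangeBasis (-Mm) Mp l).eval ξ)
    (r : ℤ → ℝ)
    (hr : ∀ n ∈ (Finset.Icc (-Mm) Mp).erase l,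
      r n ∈ Set.Ioo ((n : ℝ) - 1 / 2) ((n : ℝ) + 1 / 2) ∧ αR.eval (r n) = 0) :
    αR = Polynomial.C ((-1 : ℝ) ^ (l + Mp) * (1 / ((Mm + Mp).toNat).factorial)
          * (Nat.choose (Mm + Mp).toNat (l + Mm).toNat))
        * ∏ n ∈ (Finset.Icc (-Mm) Mp).erase l, (Polynomial.X - Polynomial.C (r n)) := by
  classical
  have hlI := Finset.mem_Icc.mp hl
  set M : ℕ := (Mm + Mp).toNat with hMdef
  set s : Finset ℤ := (Finset.Icc (-Mm) Mp).erase l with hs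
  set K : ℝ := (-1 : ℝ) ^ (l + Mp) * (1 / (M.factorial : ℝ))
      * (Nat.choose M (l + Mm).toNat) with hK
  have hcard : s.card = M := by
    rw [hs, Finset.card_erase_of_mem hl, Int.card_Icc]
    omega
  -- the Lagrange basis polynomial and its top coefficient
  set L : Polynomial ℝ := lagrangeBasis (-Mm) Mp l with hL
  have hLcoeff : L.coeff M = ∏ k ∈ s, ((l:ℝ) - k)⁻¹ := by
    rw [hL]
    unfold lagrangeBasis
    rw [Finset.prod_mul_distrib, ← map_prod]
    have hmon : (∏ k ∈ s, (X - Polynomial.C ((k:ℤ) : ℝ))).Monic :=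
      monic_prod_of_monic _ _ fun k _ => monic_X_sub_C _
    have hdeg' : (∏ k ∈ s, (X - Polynomial.C ((k:ℤ) : ℝ))).natDegree = M := by
      rw [natDegree_prod_of_monic _ _ fun k _ => monic_X_sub_C _]
      simp only [Polynomial.natDegree_X_sub_C]
      rw [Finset.sum_const, hcard, smul_eq_mul, mul_one]
    rw [Polynomial.coeff_C_mul, ← hdeg', hmon.coeff_natDegree, mul_one]
  -- the top coefficient of αR equals that of L
  have hαcoeff : αR.coeff M = L.coeff M :=
    (weno_coeff_of_integral M αR L hdeg (by simpa using hint)).symm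
  -- K equals the product of inverses
  have hKval : K = ∏ k ∈ s, ((l:ℝ) - k)⁻¹ := by
    rw [Finset.prod_inv_distrib]
    have hprod := weno_int_prod_lemma (-Mm) Mp l hl
    have hla : l - (-Mm) = l + Mm := by ring
    rw [hla] at hprod
    rw [hs, hprod]
    set i : ℕ := (l + Mm).toNat with hi
    set j : ℕ := (Mp - l).toNat with hj
    have hij : i + j = M := by omega
    have hchooseN : M.choose i * i.factorial * j.factorial = M.factorial := by
      rw [← hij, Nat.choose_symm_add]
      exact Nat.add_choose_mul_factorial_mul_factorial i j
    have hchoose : (M.choose i : ℝ) * i.factorial * j.factorial = M.factorial := by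
      exact_mod_cast hchooseN
    have hsign : (-1 : ℝ) ^ (l + Mp) = (-1 : ℝ) ^ j := by
      have h1 : l + Mp = (j : ℤ) + 2 * l := by omega
      rw [h1, zpow_add₀ (by norm_num : (-1:ℝ) ≠ 0), zpow_natCast]
      have h2 : ((-1:ℝ)) ^ (2 * l) = (((-1:ℝ)^2)) ^ l := by
        rw [← zpow_natCast ((-1:ℝ)) 2, ← zpow_mul]
        norm_num
      rw [h2]
      norm_num
    have hfi : (i.factorial : ℝ) ≠ 0 := by positivity
    have hfj : (j.factorial : ℝ) ≠ 0 := by positivity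
    have hfM : (M.factorial : ℝ) ≠ 0 := by positivity
    rw [hK, hsign]
    rcases Nat.even_or_odd j with hp | hp
    · rw [hp.neg_one_pow]
      field_simp
      linear_combination hchoose
    · rw [hp.neg_one_pow]
      field_simp
      linear_combination (-1) * hchoose
  -- the monic product over the roots
  set P0 : Polynomial ℝ := ∏ n ∈ s, (X - Polynomial.C (r n)) with hP0
  have hP0mon : P0.Monic := monic_prod_of_monic _ _ fun k _ => monic_X_sub_C _
  have hP0deg : P0.natDegree = M := by
    rw [hP0, natDegree_prod_of_monic _ _ fun k _ => monic_X_sub_C _]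
    simp [Polynomial.natDegree_X_sub_C, hcard]
  have hP0coeff : P0.coeff M = 1 := by
    rw [← hP0deg, hP0mon.coeff_natDegree]
  -- r is injective on s
  have hinj : Set.InjOn r ↑s := by
    intro n hn m hm heq
    have h1 := (hr n hn).1
    have h2 := (hr m hm).1
    rw [Set.mem_Ioo] at h1 h2
    rw [heq] at h1
    have hnm : (n:ℝ) < (m:ℝ) + 1 := by linarith
    have hmn : (m:ℝ) < (n:ℝ) + 1 := by linarith
    have hnm' : n < m + 1 := by exact_mod_cast hnm
    have hmn' : m < n + 1 := by exact_mod_cast hmn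
    omega
  -- the difference vanishes
  have hDzero : αR - Polynomial.C K * P0 = 0 := by
    apply Polynomial.eq_zero_of_degree_lt_of_eval_index_eq_zero s hinj
    · rw [hcard]
      rw [Polynomial.degree_lt_iff_coeff_zero]
      intro m hm
      have hm' : M ≤ m := by exact_mod_cast hm
      rw [Polynomial.coeff_sub, Polynomial.coeff_C_mul]
      rcases eq_or_lt_of_le hm' with hEq | hLt
      · rw [← hEq, hP0coeff, hαcoeff, hLcoeff, ← hKval, mul_one, sub_self]
      · have hz1 : αR.coeff m = 0 := by
          apply Polynomial.coeff_eq_zero_of_degree_lt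
          exact lt_of_le_of_lt hdeg (by exact_mod_cast hLt)
        have hz2 : P0.coeff m = 0 := by
          apply Polynomial.coeff_eq_zero_of_natDegree_lt
          omega
        rw [hz1, hz2, mul_zero, sub_self]
    · intro n hn
      rw [Polynomial.eval_sub, Polynomial.eval_mul, Polynomial.eval_C, (hr n hn).2]
      have : P0.eval (r n) = 0 := by
        rw [hP0, Polynomial.eval_prod]
        refine Finset.prod_eq_zero hn ?_
        simp
      rw [this, mul_zero, sub_zero]
  have := sub_eq_zero.mp hDzero
  rw [this]
end

section
/- The fundamental reconstruction polynomials on the two shifted substencils of equal length satisfy α_{R}^{(M₋-1,M₊)}_{M₊}(ξ) = (-1)^{M-1} · α_{R}^{(M₋,M₊-1)}_{-M₋}(ξ) for all ξ ∈ ℝ, where α_{R}^{(a,b)}_ℓ denotes the fundamental polynomial of Lagrange reconstruction for node ℓ on the stencil {-a,...,b}. -/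
open intervalIntegral Polynomial

/-- Every real polynomial has a polynomial antiderivative. -/
lemma exists_antideriv (q : Polynomial ℝ) : ∃ P : Polynomial ℝ, derivative P = q := by
  refine ⟨q.sum fun n a => C (a / (n + 1)) * X ^ (n + 1), ?_⟩
  rw [Polynomial.sum, map_sum]
  conv_rhs => rw [← q.sum_C_mul_X_pow_eq]
  rw [Polynomial.sum]
  refine Finset.sum_congr rfl fun n _ => ?_
  rw [derivative_C_mul_X_pow]
  congr 1
  push_cast
  rw [div_mul_cancel₀]
  positivity

/-- Fundamental theorem of calculus for polynomials. -/
lemma poly_ftc (P : Polynomial ℝ) (a b : ℝ) :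
    (∫ x in a..b, (derivative P).eval x) = P.eval b - P.eval a := by
  have := intervalIntegral.integral_deriv_eq_sub (f := fun y => P.eval y)
    (fun x (_ : x ∈ Set.uIcc a b) => (P.hasDerivAt x).differentiableAt)
    (by
      have : ∀ x, deriv (fun y => P.eval y) x = (derivative P).eval x := fun x => Polynomial.deriv P
      rw [funext this]
      exact (Polynomial.continuous _).intervalIntegrable _ _)
  rw [← this]
  refine intervalIntegral.integral_congr fun x _ => ?_
  exact (Polynomial.deriv P).symm

/-- The unit sliding-average operator is injective on polynomials. -/
lemma sliding_avg_inj (q : Polynomial ℝ)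
    (h : ∀ ξ : ℝ, (∫ η in (ξ - 1 / 2)..(ξ + 1 / 2), q.eval η) = 0) : q = 0 := by
  obtain ⟨P, hP⟩ := exists_antideriv q
  have key : ∀ ξ : ℝ, P.eval (ξ + 1 / 2) - P.eval (ξ - 1 / 2) = 0 := by
    intro ξ
    rw [← poly_ftc P, hP]
    exact h ξ
  have per : ∀ x : ℝ, P.eval (x + 1) = P.eval x := by
    intro x
    have := key (x + 1 / 2)
    have e1 : x + 1 / 2 + 1 / 2 = x + 1 := by ring
    have e2 : x + 1 / 2 - 1 / 2 = x := by ring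
    rw [e1, e2] at this
    linarith
  have hnat : ∀ n : ℕ, P.eval (n : ℝ) = P.eval 0 := by
    intro n
    induction n with
    | zero => norm_num
    | succ m ih => push_cast; rw [per (m : ℝ), ih]
  have hPC : P = C (P.eval 0) := by
    refine Polynomial.eq_of_infinite_eval_eq _ _ ?_
    apply Set.Infinite.mono (h := ?_) (Set.infinite_range_of_injective
      (f := ((↑) : ℕ → ℝ)) Nat.cast_injective)
    rintro x ⟨n, rfl⟩
    simp [hnat n]
  rw [← hP, hPC, derivative_C]

/-- The two shifted Lagrange basis polynomials agree up to the sign `(-1)^(M-1)`. -/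
lemma lagrange_rel (Mm Mp : ℤ) :
    lagrangeBasis (-(Mm - 1)) Mp Mp
      = C ((-1 : ℝ) ^ (Mm + Mp - 1).toNat) * lagrangeBasis (-Mm) (Mp - 1) (-Mm) := by
  set S : Finset ℤ := Finset.Icc (1 - Mm) (Mp - 1) with hSdef
  have hS1 : (Finset.Icc (-(Mm - 1)) Mp).erase Mp = S := by
    ext k; simp only [hSdef, Finset.mem_erase, Finset.mem_Icc]; omega
  have hS2 : (Finset.Icc (-Mm) (Mp - 1)).erase (-Mm) = S := by
    ext k; simp only [hSdef, Finset.mem_erase, Finset.mem_Icc]; omega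
  have hcard : S.card = (Mm + Mp - 1).toNat := by
    rw [hSdef, Int.card_Icc]; congr 1; omega
  have hscal : (∏ k ∈ S, (((Mp : ℤ) : ℝ) - (k : ℝ))⁻¹)
      = (-1 : ℝ) ^ (Mm + Mp - 1).toNat * ∏ k ∈ S, (((-Mm : ℤ) : ℝ) - (k : ℝ))⁻¹ := by
    have hA : (∏ k ∈ S, (((Mp : ℤ) : ℝ) - (k : ℝ))⁻¹)
        = ∏ k ∈ S, (((Mm : ℝ)) + (k : ℝ))⁻¹ := by
      refine Finset.prod_nbij' (fun k => Mp - Mm - k) (fun k => Mp - Mm - k) ?_ ?_ ?_ ?_ ?_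
      · intro k hk; simp only [hSdef, Finset.mem_Icc] at *; omega
      · intro k hk; simp only [hSdef, Finset.mem_Icc] at *; omega
      · intro k _; omega
      · intro k _; omega
      · intro k _; congr 1; push_cast; ring
    have hB : (∏ k ∈ S, (((-Mm : ℤ) : ℝ) - (k : ℝ))⁻¹)
        = (-1 : ℝ) ^ (Mm + Mp - 1).toNat * ∏ k ∈ S, (((Mm : ℝ)) + (k : ℝ))⁻¹ := by
      rw [← hcard]
      rw [← Finset.prod_const (-1 : ℝ), ← Finset.prod_mul_distrib]
      refine Finset.prod_congr rfl fun k _ => ?_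
      push_cast
      rw [show -(Mm : ℝ) - (k : ℝ) = -((Mm : ℝ) + k) by ring, inv_neg]
      ring
    rw [hA, hB, ← mul_assoc, ← pow_add]
    rw [Even.neg_one_pow ⟨(Mm + Mp - 1).toNat, by ring⟩, one_mul]
  unfold lagrangeBasis
  rw [hS1, hS2, Finset.prod_mul_distrib, Finset.prod_mul_distrib, ← map_prod, ← map_prod,
    hscal, map_mul, map_pow, map_neg, map_one]
  ring

/-- the fundamental reconstruction polynomials on the two shifted substencils
of equal length satisfy
`α_R^{(M₋-1,M₊)}_{M₊} = (-1)^(M-1) · α_R^{(M₋,M₊-1)}_{-M₋}`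
(here `α1` is the polynomial for node `Mp` on `{-(Mm-1),…,Mp}` and `α2` for node `-Mm`
on `{-Mm,…,Mp-1}`). -/
theorem reconstruction_shifted_substencil_identity (Mm Mp : ℤ) (hM : 2 ≤ Mm + Mp)
    (α1 α2 : Polynomial ℝ)
    (h1deg : α1.degree ≤ ((Mm + Mp - 1).toNat : ℕ))
    (h1 : ∀ ξ : ℝ, (∫ η in (ξ - 1 / 2)..(ξ + 1 / 2), α1.eval η)
      = (lagrangeBasis (-(Mm - 1)) Mp Mp).eval ξ)
    (h2deg : α2.degree ≤ ((Mm + Mp - 1).toNat : ℕ))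
    (h2 : ∀ ξ : ℝ, (∫ η in (ξ - 1 / 2)..(ξ + 1 / 2), α2.eval η)
      = (lagrangeBasis (-Mm) (Mp - 1) (-Mm)).eval ξ) :
    α1 = Polynomial.C ((-1 : ℝ) ^ (Mm + Mp - 1)) * α2 := by
  have hn : ((Mm + Mp - 1).toNat : ℤ) = Mm + Mp - 1 := Int.toNat_of_nonneg (by omega)
  have hz : ((-1 : ℝ) ^ (Mm + Mp - 1)) = (-1 : ℝ) ^ (Mm + Mp - 1).toNat := by
    conv_lhs => rw [← hn]
    exact zpow_natCast _ _
  rw [hz]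
  set c : ℝ := (-1 : ℝ) ^ (Mm + Mp - 1).toNat with hc
  have hq : α1 - C c * α2 = 0 := by
    apply sliding_avg_inj
    intro ξ
    have hint1 : IntervalIntegrable (fun η => α1.eval η) MeasureTheory.volume
        (ξ - 1 / 2) (ξ + 1 / 2) := (Polynomial.continuous _).intervalIntegrable _ _
    have hint2 : IntervalIntegrable (fun η => c * α2.eval η) MeasureTheory.volume
        (ξ - 1 / 2) (ξ + 1 / 2) :=
      (continuous_const.mul (Polynomial.continuous _)).intervalIntegrable _ _
    have heval : ∀ η : ℝ, (α1 - C c * α2).eval η = α1.eval η - c * α2.eval η := by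
      intro η; simp [eval_sub, eval_mul]
    rw [intervalIntegral.integral_congr (g := fun η => α1.eval η - c * α2.eval η)
      (fun η _ => heval η)]
    rw [intervalIntegral.integral_sub hint1 hint2, intervalIntegral.integral_const_mul,
      h1 ξ, h2 ξ, lagrange_rel Mm Mp, eval_mul, eval_C, ← hc]
    ring
  exact sub_eq_zero.mp hq
end

section
/- Define, for each choice of stencil, the Lagrange reconstructing polynomial of data (f_ℓ) by p_R(ξ) = Σ_ℓ α_{R,ℓ}(ξ) f_ℓ. Then the reconstructing polynomial on the full stencil {-M₋,...,M₊} equals [λ₊(ξ) p_R^{left}(ξ) - λ₋(ξ) p_R^{right}(ξ)] / [λ₊(ξ) - λ₋(ξ)] for all ξ where the denominator is nonzero, where p_R^{left}, p_R^{right} are the reconstructing polynomials on the substencils {-M₋,...,M₊-1} and {-M₋+1,...,M₊}, λ₋ := μ^{(M₋,M₊-1)}_M and λ₊ := μ^{(M₋-1,M₊)}_M are the leading error polynomials of the two substencils, and the denominator λ₊ - λ₋ equals α_{R}^{(M₋-1,M₊)}_{M₊}, which is not identically zero. -/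
open intervalIntegral Polynomial

noncomputable def pAnti (p : Polynomial ℝ) : Polynomial ℝ :=
  p.sum fun n a => C (a / (n + 1)) * X ^ (n + 1)

lemma derivative_pAnti (p : Polynomial ℝ) : derivative (pAnti p) = p := by
  conv_rhs => rw [p.as_sum_support_C_mul_X_pow]
  unfold pAnti Polynomial.sum
  rw [map_sum]
  refine Finset.sum_congr rfl fun n _ => ?_
  rw [derivative_C_mul, derivative_X_pow]
  rw [← mul_assoc, ← C_mul]
  push_cast
  rw [div_mul_cancel₀ _ (Nat.cast_add_one_ne_zero n)]

lemma poly_integral_deriv (p : Polynomial ℝ) (a b : ℝ) :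
    (∫ x in a..b, (derivative p).eval x) = p.eval b - p.eval a :=
  intervalIntegral.integral_eq_sub_of_hasDerivAt (fun x _ => p.hasDerivAt x)
    (((derivative p).continuous_aeval).intervalIntegrable a b)

lemma poly_integral (p : Polynomial ℝ) (a b : ℝ) :
    (∫ x in a..b, p.eval x) = (pAnti p).eval b - (pAnti p).eval a := by
  rw [← poly_integral_deriv (pAnti p) a b, derivative_pAnti]

lemma SA_deriv {p q : Polynomial ℝ}
    (h : ∀ ξ : ℝ, (∫ η in (ξ - 1 / 2)..(ξ + 1 / 2), p.eval η) = q.eval ξ) :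
    ∀ ξ : ℝ, (∫ η in (ξ - 1 / 2)..(ξ + 1 / 2), (derivative p).eval η) = (derivative q).eval ξ := by
  have hq : q = (pAnti p).comp (X + C (1 / 2)) - (pAnti p).comp (X - C (1 / 2)) := by
    apply Polynomial.funext
    intro x
    rw [← h x, poly_integral]
    simp [eval_comp]
  intro ξ
  rw [poly_integral_deriv, hq]
  simp [derivative_comp, eval_comp, derivative_pAnti]

lemma SA_iter {p q : Polynomial ℝ}
    (h : ∀ ξ : ℝ, (∫ η in (ξ - 1 / 2)..(ξ + 1 / 2), p.eval η) = q.eval ξ) (n : ℕ) :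
    ∀ ξ : ℝ, (∫ η in (ξ - 1 / 2)..(ξ + 1 / 2), (derivative^[n] p).eval η)
      = (derivative^[n] q).eval ξ := by
  induction n with
  | zero => simpa using h
  | succ k ih =>
      intro ξ
      rw [Function.iterate_succ_apply', Function.iterate_succ_apply']
      exact SA_deriv ih ξ

lemma iterDeriv_of_natDegree_le (p : Polynomial ℝ) (M : ℕ) (h : p.natDegree ≤ M) :
    derivative^[M] p = C ((Nat.factorial M : ℝ) * p.coeff M) := by
  have h0 : (derivative^[M] p).natDegree ≤ 0 := by
    refine (natDegree_iterate_derivative p M).trans ?_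
    omega
  rw [eq_C_of_natDegree_le_zero h0, coeff_iterate_derivative]
  simp [Nat.descFactorial_self, nsmul_eq_mul]

lemma lagrangeBasis_eval_self (a b l : ℤ) :
    (lagrangeBasis a b l).eval (l : ℝ) = 1 := by
  unfold lagrangeBasis
  rw [eval_prod]
  apply Finset.prod_eq_one
  intro k hk
  have hkl : (l : ℝ) - (k : ℝ) ≠ 0 := by
    have : k ≠ l := Finset.ne_of_mem_erase hk
    intro hc
    apply this
    exact_mod_cast sub_eq_zero.mp hc |>.symm
  simp [inv_mul_cancel₀ hkl]

lemma lagrangeBasis_eval_ne (a b l m : ℤ) (hm : m ∈ Finset.Icc a b) (hne : m ≠ l) :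
    (lagrangeBasis a b l).eval (m : ℝ) = 0 := by
  unfold lagrangeBasis
  rw [eval_prod]
  apply Finset.prod_eq_zero (Finset.mem_erase.mpr ⟨hne, hm⟩)
  simp

lemma prod_sub_eq_factorial : ∀ (n : ℕ) (b : ℤ),
    (∏ k ∈ Finset.Ico (b - n) b, ((b : ℝ) - (k : ℝ))) = Nat.factorial n := by
  intro n
  induction n with
  | zero => intro b; simp
  | succ m ih =>
      intro b
      have h2 : Finset.Ico (b - (m + 1 : ℕ) : ℤ) b
          = insert (b - (m + 1 : ℕ) : ℤ) (Finset.Ico (b - m : ℤ) b) := by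
        ext x
        simp only [Finset.mem_Ico, Finset.mem_insert]
        push_cast
        omega
      have h3 : (b - (m + 1 : ℕ) : ℤ) ∉ Finset.Ico (b - m : ℤ) b := by
        simp only [Finset.mem_Ico]
        push_cast
        omega
      rw [h2, Finset.prod_insert h3, ih b]
      have : (b : ℝ) - ((b : ℤ) - (m + 1 : ℕ) : ℤ) = (m : ℝ) + 1 := by push_cast; ring
      rw [this, Nat.factorial_succ]
      push_cast
      ring

lemma lagrangeBasis_right_coeff (a b : ℤ) (h : a ≤ b) :
    (lagrangeBasis a b b).natDegree ≤ (b - a).toNat ∧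
      (Nat.factorial (b - a).toNat : ℝ) * (lagrangeBasis a b b).coeff ((b - a).toNat) = 1 := by
  set n := (b - a).toNat with hn
  have hs : (Finset.Icc a b).erase b = Finset.Ico a b := Finset.Icc_erase_right a b
  have hL : lagrangeBasis a b b
      = C (∏ k ∈ Finset.Ico a b, ((b : ℝ) - (k : ℝ))⁻¹)
        * ∏ k ∈ Finset.Ico a b, (X - C (k : ℝ)) := by
    unfold lagrangeBasis
    rw [hs, Finset.prod_mul_distrib, map_prod]
  have hmon : (∏ k ∈ Finset.Ico a b, (X - C ((k : ℝ)))).Monic :=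
    monic_prod_of_monic _ _ fun k _ => monic_X_sub_C _
  have hdeg : (∏ k ∈ Finset.Ico a b, (X - C ((k : ℝ)))).natDegree = n := by
    rw [natDegree_prod_of_monic _ _ fun k _ => monic_X_sub_C _]
    simp only [natDegree_X_sub_C]
    simp [Int.card_Ico]
    exact hn.symm
  have hprod : (∏ k ∈ Finset.Ico a b, ((b : ℝ) - (k : ℝ))) = Nat.factorial n := by
    have hba : b - (n : ℤ) = a := by omega
    rw [← hba]
    exact prod_sub_eq_factorial n b
  constructor
  · rw [hL]
    exact (natDegree_C_mul_le _ _).trans hdeg.le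
  · have hc : (∏ k ∈ Finset.Ico a b, (X - C ((k : ℝ)))).coeff n = 1 := by
      rw [← hdeg]; exact hmon.coeff_natDegree
    rw [hL, coeff_C_mul, hc, mul_one, Finset.prod_inv_distrib, hprod, mul_inv_cancel₀]
    exact_mod_cast Nat.factorial_ne_zero n

/-- the Lagrange reconstructing polynomial on the full stencil `{-M₋,…,M₊}`
equals `(λ₊ p_R^left - λ₋ p_R^right)/(λ₊ - λ₋)` wherever the denominator is nonzero, and
the denominator `λ₊ - λ₋` equals `α_R^{(M₋-1,M₊)}_{M₊}`, which is not identically zero.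
Here `αfull`, `αleft`, `αright` are the families of fundamental reconstruction polynomials
on the full stencil, on `{-M₋,…,M₊-1}` and on `{-M₋+1,…,M₊}`, and `λ₋, λ₊` are the leading
error polynomials of the two substencils, characterized on polynomial data. -/
theorem reconstruction_one_level_combination (Mm Mp : ℤ) (hM : 2 ≤ Mm + Mp)
    (αfull αleft αright : ℤ → Polynomial ℝ) (lamM lamP : Polynomial ℝ)
    (hfull : ∀ l ∈ Finset.Icc (-Mm) Mp,
      (αfull l).degree ≤ ((Mm + Mp).toNat : ℕ) ∧
      ∀ ξ : ℝ, (∫ η in (ξ - 1 / 2)..(ξ + 1 / 2), (αfull l).eval η)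
        = (lagrangeBasis (-Mm) Mp l).eval ξ)
    (hleft : ∀ l ∈ Finset.Icc (-Mm) (Mp - 1),
      (αleft l).degree ≤ ((Mm + Mp - 1).toNat : ℕ) ∧
      ∀ ξ : ℝ, (∫ η in (ξ - 1 / 2)..(ξ + 1 / 2), (αleft l).eval η)
        = (lagrangeBasis (-Mm) (Mp - 1) l).eval ξ)
    (hright : ∀ l ∈ Finset.Icc (-Mm + 1) Mp,
      (αright l).degree ≤ ((Mm + Mp - 1).toNat : ℕ) ∧
      ∀ ξ : ℝ, (∫ η in (ξ - 1 / 2)..(ξ + 1 / 2), (αright l).eval η)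
        = (lagrangeBasis (-(Mm - 1)) Mp l).eval ξ)
    -- λ₋ : leading error polynomial of the left substencil {-M₋,…,M₊-1}
    (hlamM : ∀ p : Polynomial ℝ, p.degree ≤ ((Mm + Mp).toNat : ℕ) → ∀ ξ : ℝ,
      (∑ l ∈ Finset.Icc (-Mm) (Mp - 1), (αleft l).eval ξ *
          (∫ η in ((l : ℝ) - 1 / 2)..((l : ℝ) + 1 / 2), p.eval η))
        = p.eval ξ + lamM.eval ξ *
            ((fun q : Polynomial ℝ => Polynomial.derivative q)^[(Mm + Mp).toNat] p).eval ξ)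
    -- λ₊ : leading error polynomial of the right substencil {-M₋+1,…,M₊}
    (hlamP : ∀ p : Polynomial ℝ, p.degree ≤ ((Mm + Mp).toNat : ℕ) → ∀ ξ : ℝ,
      (∑ l ∈ Finset.Icc (-Mm + 1) Mp, (αright l).eval ξ *
          (∫ η in ((l : ℝ) - 1 / 2)..((l : ℝ) + 1 / 2), p.eval η))
        = p.eval ξ + lamP.eval ξ *
            ((fun q : Polynomial ℝ => Polynomial.derivative q)^[(Mm + Mp).toNat] p).eval ξ) :
    (lamP - lamM = αright Mp ∧ αright Mp ≠ 0) ∧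
    ∀ f : ℤ → ℝ, ∀ ξ : ℝ, lamP.eval ξ - lamM.eval ξ ≠ 0 →
      (∑ l ∈ Finset.Icc (-Mm) Mp, (αfull l).eval ξ * f l)
        = (lamP.eval ξ * (∑ l ∈ Finset.Icc (-Mm) (Mp - 1), (αleft l).eval ξ * f l)
            - lamM.eval ξ * (∑ l ∈ Finset.Icc (-Mm + 1) Mp, (αright l).eval ξ * f l))
          / (lamP.eval ξ - lamM.eval ξ) := by
  have hMpfull : Mp ∈ Finset.Icc (-Mm) Mp := by
    simp only [Finset.mem_Icc]
    omega
  obtain ⟨hdegF, hintF⟩ := hfull Mp hMpfull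
  have hndF : (αfull Mp).natDegree ≤ (Mm + Mp).toNat := natDegree_le_iff_degree_le.mpr hdegF
  -- the M-th derivative of `lagrangeBasis (-Mm) Mp Mp` is `C 1`
  obtain ⟨hLnd, hLcoeff⟩ := lagrangeBasis_right_coeff (-Mm) Mp (by omega)
  have hLn : (Mp - (-Mm)).toNat = (Mm + Mp).toNat := by omega
  rw [hLn] at hLnd hLcoeff
  have hdL : derivative^[(Mm + Mp).toNat] (lagrangeBasis (-Mm) Mp Mp) = C 1 := by
    rw [iterDeriv_of_natDegree_le _ _ hLnd, hLcoeff]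
  -- the M-th derivative of `αfull Mp` is `C 1`
  have hcF : (fun q : Polynomial ℝ => Polynomial.derivative q)^[(Mm + Mp).toNat] (αfull Mp)
      = C 1 := by
    show derivative^[(Mm + Mp).toNat] (αfull Mp) = C 1
    have h0 := SA_iter hintF (Mm + Mp).toNat 0
    rw [iterDeriv_of_natDegree_le _ _ hndF, hdL] at h0
    simp only [eval_C, intervalIntegral.integral_const, smul_eq_mul] at h0
    rw [iterDeriv_of_natDegree_le _ _ hndF]
    rw [show (Nat.factorial (Mm + Mp).toNat : ℝ) * (αfull Mp).coeff (Mm + Mp).toNat = 1 by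
      linarith [h0]]
  have hkey : ∀ ξ : ℝ, (αright Mp).eval ξ = lamP.eval ξ - lamM.eval ξ := by
    intro ξ
    have hL := hlamM (αfull Mp) hdegF ξ
    have hR := hlamP (αfull Mp) hdegF ξ
    rw [hcF] at hL hR
    have hLsum : (∑ l ∈ Finset.Icc (-Mm) (Mp - 1), (αleft l).eval ξ *
        (∫ η in ((l : ℝ) - 1 / 2)..((l : ℝ) + 1 / 2), (αfull Mp).eval η)) = 0 := by
      apply Finset.sum_eq_zero
      intro l hl
      simp only [Finset.mem_Icc] at hl
      rw [hintF (l : ℝ), lagrangeBasis_eval_ne (-Mm) Mp Mp l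
        (by simp only [Finset.mem_Icc]; omega) (by omega), mul_zero]
    have hRsum : (∑ l ∈ Finset.Icc (-Mm + 1) Mp, (αright l).eval ξ *
        (∫ η in ((l : ℝ) - 1 / 2)..((l : ℝ) + 1 / 2), (αfull Mp).eval η))
        = (αright Mp).eval ξ := by
      rw [Finset.sum_eq_single Mp]
      · rw [hintF (Mp : ℝ), lagrangeBasis_eval_self, mul_one]
      · intro l hl hne
        simp only [Finset.mem_Icc] at hl
        rw [hintF (l : ℝ), lagrangeBasis_eval_ne (-Mm) Mp Mp l
          (by simp only [Finset.mem_Icc]; omega) hne, mul_zero]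
      · intro hnm
        exact absurd (by simp only [Finset.mem_Icc]; omega) hnm
    rw [hLsum] at hL
    rw [hRsum] at hR
    simp only [eval_C, mul_one] at hL hR
    linarith
  refine ⟨⟨?_, ?_⟩, ?_⟩
  · apply Polynomial.funext
    intro x
    rw [eval_sub, ← hkey x]
  · intro h0
    have h1 := (hright Mp (by simp only [Finset.mem_Icc]; omega)).2 (Mp : ℝ)
    rw [h0] at h1
    simp only [eval_zero, intervalIntegral.integral_zero] at h1
    rw [lagrangeBasis_eval_self] at h1
    exact one_ne_zero h1.symm
  · intro f ξ hd
    set p : Polynomial ℝ := ∑ l ∈ Finset.Icc (-Mm) Mp, f l • αfull l with hp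
    have hdegp : p.degree ≤ (((Mm + Mp).toNat : ℕ) : WithBot ℕ) := by
      refine (degree_sum_le _ _).trans ?_
      refine Finset.sup_le fun l hl => ?_
      exact (degree_smul_le _ _).trans (hfull l hl).1
    have hq : ∀ m ∈ Finset.Icc (-Mm) Mp,
        (∫ η in ((m : ℝ) - 1 / 2)..((m : ℝ) + 1 / 2), p.eval η) = f m := by
      intro m hm
      have hev : ∀ η : ℝ, p.eval η
          = ∑ l ∈ Finset.Icc (-Mm) Mp, f l * (αfull l).eval η := by
        intro η
        rw [hp, eval_finset_sum]
        exact Finset.sum_congr rfl fun l _ => by rw [eval_smul, smul_eq_mul]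
      rw [intervalIntegral.integral_congr
        (g := fun η => ∑ l ∈ Finset.Icc (-Mm) Mp, f l * (αfull l).eval η)
        (fun x _ => hev x)]
      rw [intervalIntegral.integral_finset_sum (f := fun l x => f l * (αfull l).eval x) (fun l _ =>
        (Continuous.intervalIntegrable
          (continuous_const.mul ((αfull l).continuous) :
            Continuous fun x => f l * (αfull l).eval x) _ _))]
      rw [Finset.sum_congr rfl (fun l hl => by
        rw [intervalIntegral.integral_const_mul, (hfull l hl).2 (m : ℝ)])]
      rw [Finset.sum_eq_single m]
      · rw [lagrangeBasis_eval_self, mul_one]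
      · intro l hl hne
        rw [lagrangeBasis_eval_ne (-Mm) Mp l m hm (Ne.symm hne), mul_zero]
      · intro hnm
        exact absurd hm hnm
    have hL := hlamM p hdegp ξ
    have hR := hlamP p hdegp ξ
    rw [Finset.sum_congr rfl (fun l hl => by
      rw [hq l (by simp only [Finset.mem_Icc] at hl ⊢; omega)])] at hL
    rw [Finset.sum_congr rfl (fun l hl => by
      rw [hq l (by simp only [Finset.mem_Icc] at hl ⊢; omega)])] at hR
    have hfullsum : (∑ l ∈ Finset.Icc (-Mm) Mp, (αfull l).eval ξ * f l) = p.eval ξ := by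
      rw [hp, eval_finset_sum]
      exact Finset.sum_congr rfl fun l _ => by rw [eval_smul, smul_eq_mul, mul_comm]
    rw [hfullsum, hL, hR]
    set D := ((fun q : Polynomial ℝ => Polynomial.derivative q)^[(Mm + Mp).toNat] p).eval ξ
    field_simp
    ring
end

section
/- The weight functions σ₀(ξ) := α_{R}^{(M₋,M₊)}_{-M₋}(ξ) / α_{R}^{(M₋,M₊-1)}_{-M₋}(ξ) and σ₁(ξ) := α_{R}^{(M₋,M₊)}_{M₊}(ξ) / α_{R}^{(M₋-1,M₊)}_{M₊}(ξ) satisfy the consistency identity σ₀(ξ) + σ₁(ξ) = 1 at every ξ where they are defined (i.e. where α_{R}^{(M₋-1,M₊)}_{M₊}(ξ) ≠ 0). -/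
open intervalIntegral Polynomial

/-- A real polynomial whose unit sliding average vanishes identically is zero. -/
lemma sliding_zero (p : Polynomial ℝ)
    (h : ∀ ξ : ℝ, (∫ η in (ξ - 1 / 2)..(ξ + 1 / 2), p.eval η) = 0) : p = 0 := by
  have hc : Continuous fun x : ℝ => p.eval x := p.continuous
  have hint : ∀ a b : ℝ, IntervalIntegrable (fun x => p.eval x) MeasureTheory.volume a b :=
    fun a b => hc.intervalIntegrable a b
  set F : ℝ → ℝ := fun x => ∫ η in (0:ℝ)..x, p.eval η with hF
  have hder : ∀ x : ℝ, HasDerivAt F (p.eval x) x := fun x =>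
    intervalIntegral.integral_hasDerivAt_right (hint 0 x)
      (hc.stronglyMeasurableAtFilter _ _) hc.continuousAt
  have hper : ∀ x : ℝ, F (x + 1) = F x := by
    intro x
    have hsplit := intervalIntegral.integral_add_adjacent_intervals (f := fun x => p.eval x)
      (μ := MeasureTheory.volume) (hint 0 x) (hint x (x+1))
    have h2 := h (x + 1/2)
    have e1 : x + 1/2 - 1/2 = x := by ring
    have e2 : x + 1/2 + 1/2 = x + 1 := by ring
    rw [e1, e2] at h2
    simp only [hF]
    rw [← hsplit, h2, add_zero]
  have hstep : ∀ x : ℝ, p.eval (x + 1) = p.eval x := by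
    intro x
    have h1 : HasDerivAt (fun y => F (y + 1)) (p.eval (x + 1)) x := by
      have := (hder (x + 1)).comp x ((hasDerivAt_id x).add_const 1)
      simpa [Function.comp_def] using this
    have h2 : HasDerivAt F (p.eval (x + 1)) x := by
      have : (fun y => F (y + 1)) = F := funext hper
      rwa [this] at h1
    exact h2.unique (hder x)
  have hnat : ∀ n : ℕ, p.eval (n : ℝ) = p.eval 0 := by
    intro n
    induction n with
    | zero => simp
    | succ n ih => push_cast; rw [hstep]; exact ih
  have hq : p - C (p.eval 0) = 0 := by
    apply Polynomial.eq_zero_of_infinite_isRoot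
    apply Set.infinite_of_injective_forall_mem (f := fun n : ℕ => (n : ℝ))
      Nat.cast_injective
    intro n
    simp [Polynomial.IsRoot, hnat n]
  have hp : p = C (p.eval 0) := sub_eq_zero.mp hq
  have h0 := h 0
  rw [hp] at h0 ⊢
  simp at h0
  simp [h0]

/-- Reflection sign identity for products over the interior nodes. -/
lemma prod_reflect (Mm Mp : ℤ) :
    ∏ k ∈ Finset.Ioo (-Mm) Mp, ((Mp:ℝ) - (k:ℝ))
      = (-1)^(Finset.Ioo (-Mm) Mp).card * ∏ k ∈ Finset.Ioo (-Mm) Mp, ((-Mm:ℝ) - (k:ℝ)) := by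
  have h1 : ∏ k ∈ Finset.Ioo (-Mm) Mp, ((Mp:ℝ) - (k:ℝ))
      = ∏ k ∈ Finset.Ioo (-Mm) Mp, (-(((-Mm:ℝ)) - (k:ℝ))) := by
    refine Finset.prod_nbij' (fun k => Mp - Mm - k) (fun k => Mp - Mm - k) ?_ ?_ ?_ ?_ ?_
    · intro a ha; simp only [Finset.mem_Ioo] at *; omega
    · intro a ha; simp only [Finset.mem_Ioo] at *; omega
    · intro a _; show Mp - Mm - (Mp - Mm - a) = a; omega
    · intro a _; show Mp - Mm - (Mp - Mm - a) = a; omega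
    · intro a _; push_cast; ring
  rw [h1]
  simp_rw [neg_eq_neg_one_mul ((-(Mm:ℝ)) - _)]
  rw [Finset.prod_mul_distrib, Finset.prod_const]

/-- the weight-functions
`σ₀ = α_R^{(M₋,M₊)}_{-M₋}/α_R^{(M₋,M₊-1)}_{-M₋}` and
`σ₁ = α_R^{(M₋,M₊)}_{M₊}/α_R^{(M₋-1,M₊)}_{M₊}` satisfy `σ₀(ξ) + σ₁(ξ) = 1` at every `ξ`
where `α_R^{(M₋-1,M₊)}_{M₊}(ξ) ≠ 0`. Here `a0 = α_R^{(M₋,M₊)}_{-M₋}`,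
`a1 = α_R^{(M₋,M₊)}_{M₊}`, `b0 = α_R^{(M₋,M₊-1)}_{-M₋}`, `b1 = α_R^{(M₋-1,M₊)}_{M₊}`. -/
theorem reconstruction_weight_consistency (Mm Mp : ℤ) (hM : 2 ≤ Mm + Mp)
    (a0 a1 b0 b1 : Polynomial ℝ)
    (ha0deg : a0.degree ≤ ((Mm + Mp).toNat : ℕ))
    (ha0 : ∀ ξ : ℝ, (∫ η in (ξ - 1 / 2)..(ξ + 1 / 2), a0.eval η)
      = (lagrangeBasis (-Mm) Mp (-Mm)).eval ξ)
    (ha1deg : a1.degree ≤ ((Mm + Mp).toNat : ℕ))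
    (ha1 : ∀ ξ : ℝ, (∫ η in (ξ - 1 / 2)..(ξ + 1 / 2), a1.eval η)
      = (lagrangeBasis (-Mm) Mp Mp).eval ξ)
    (hb0deg : b0.degree ≤ ((Mm + Mp - 1).toNat : ℕ))
    (hb0 : ∀ ξ : ℝ, (∫ η in (ξ - 1 / 2)..(ξ + 1 / 2), b0.eval η)
      = (lagrangeBasis (-Mm) (Mp - 1) (-Mm)).eval ξ)
    (hb1deg : b1.degree ≤ ((Mm + Mp - 1).toNat : ℕ))
    (hb1 : ∀ ξ : ℝ, (∫ η in (ξ - 1 / 2)..(ξ + 1 / 2), b1.eval η)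
      = (lagrangeBasis (-(Mm - 1)) Mp Mp).eval ξ) :
    ∀ ξ : ℝ, b1.eval ξ ≠ 0 →
      a0.eval ξ / b0.eval ξ + a1.eval ξ / b1.eval ξ = 1 := by
  classical
  set I : Finset ℤ := Finset.Ioo (-Mm) Mp with hI
  set c : ℝ := (-1)^I.card with hcdef
  have hc2 : c * c = 1 := by rw [hcdef, ← mul_pow]; norm_num
  have hcne : c ≠ 0 := by
    intro h0; rw [h0, zero_mul] at hc2; exact zero_ne_one hc2
  clear_value c
  -- evaluation of the Lagrange basis
  have heval : ∀ (a b l : ℤ) (ζ : ℝ), (lagrangeBasis a b l).eval ζ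
      = ∏ k ∈ (Finset.Icc a b).erase l, (((l:ℝ) - (k:ℝ))⁻¹ * (ζ - (k:ℝ))) := by
    intro a b l ζ
    simp [lagrangeBasis, Polynomial.eval_prod]
  -- the node sets
  have e_a0 : (Finset.Icc (-Mm) Mp).erase (-Mm) = insert Mp I := by
    ext k; simp only [hI, Finset.mem_erase, Finset.mem_Icc, Finset.mem_insert,
      Finset.mem_Ioo]; omega
  have e_a1 : (Finset.Icc (-Mm) Mp).erase Mp = insert (-Mm) I := by
    ext k; simp only [hI, Finset.mem_erase, Finset.mem_Icc, Finset.mem_insert,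
      Finset.mem_Ioo]; omega
  have e_b0 : (Finset.Icc (-Mm) (Mp - 1)).erase (-Mm) = I := by
    ext k; simp only [hI, Finset.mem_erase, Finset.mem_Icc, Finset.mem_Ioo]; omega
  have e_b1 : (Finset.Icc (-(Mm - 1)) Mp).erase Mp = I := by
    ext k; simp only [hI, Finset.mem_erase, Finset.mem_Icc, Finset.mem_Ioo]; omega
  have hMpI : Mp ∉ I := by simp [hI]
  have hMmI : -Mm ∉ I := by simp [hI]
  -- key pointwise identity between the two interior products
  have key : ∀ ζ : ℝ, ∏ k ∈ I, ((((-Mm : ℤ)):ℝ) - (k:ℝ))⁻¹ * (ζ - (k:ℝ))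
      = c * ∏ k ∈ I, (((Mp:ℤ):ℝ) - (k:ℝ))⁻¹ * (ζ - (k:ℝ)) := by
    intro ζ
    have hcinv : c⁻¹ = c := inv_eq_of_mul_eq_one_right hc2
    have hinv : ∏ k ∈ I, ((((-Mm : ℤ)):ℝ) - (k:ℝ))⁻¹ = c * ∏ k ∈ I, (((Mp:ℤ):ℝ) - (k:ℝ))⁻¹ := by
      have hcast : ((-Mm : ℤ):ℝ) = -(Mm:ℝ) := by push_cast; ring
      simp_rw [hcast]
      rw [Finset.prod_inv_distrib, Finset.prod_inv_distrib]
      have hrefl := prod_reflect Mm Mp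
      rw [← hI, ← hcdef] at hrefl
      rw [hrefl, mul_inv, hcinv, ← mul_assoc, hc2, one_mul]
    rw [Finset.prod_mul_distrib, Finset.prod_mul_distrib, hinv]
    ring
  -- integrability helper
  have hint : ∀ (q : Polynomial ℝ) (a b : ℝ),
      IntervalIntegrable (fun x => q.eval x) MeasureTheory.volume a b :=
    fun q a b => q.continuous.intervalIntegrable a b
  -- first polynomial identity : b0 = c • b1
  have hb0b1 : b0 = C c * b1 := by
    rw [← sub_eq_zero]
    apply sliding_zero
    intro ζ
    have : (fun η => (b0 - C c * b1).eval η) = fun η => b0.eval η - c * b1.eval η := by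
      funext η; simp
    rw [this, intervalIntegral.integral_sub (hint b0 _ _) (by
      simpa using (hint (C c * b1) (ζ - 1/2) (ζ + 1/2))),
      intervalIntegral.integral_const_mul, hb0 ζ, hb1 ζ, heval, heval, e_b0, e_b1, key ζ]
    ring
  -- second polynomial identity : C c * a0 + a1 = b1
  have haa : C c * a0 + a1 = b1 := by
    rw [← sub_eq_zero]
    apply sliding_zero
    intro ζ
    have : (fun η => (C c * a0 + a1 - b1).eval η)
        = fun η => c * a0.eval η + a1.eval η - b1.eval η := by
      funext η; simp
    rw [this, intervalIntegral.integral_sub (by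
        exact ((hint a0 _ _).const_mul c).add (hint a1 _ _)) (hint b1 _ _),
      intervalIntegral.integral_add ((hint a0 _ _).const_mul c) (hint a1 _ _),
      intervalIntegral.integral_const_mul, ha0 ζ, ha1 ζ, hb1 ζ,
      heval, heval, heval, e_a0, e_a1, e_b1,
      Finset.prod_insert hMpI, Finset.prod_insert hMmI, key ζ]
    have hMne : ((Mm:ℝ) + (Mp:ℝ)) ≠ 0 := by
      have h0 : (0:ℝ) < (Mm:ℝ) + (Mp:ℝ) := by
        have : (0:ℤ) < Mm + Mp := by omega
        exact_mod_cast this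
      exact h0.ne'
    have hMne2 : ((Mp:ℝ) + (Mm:ℝ)) ≠ 0 := by rw [add_comm]; exact hMne
    set B := ∏ k ∈ I, (((Mp:ℤ):ℝ) - (k:ℝ))⁻¹ * (ζ - (k:ℝ)) with hB
    clear_value B
    push_cast
    have h1 : (-(Mm:ℝ) - (Mp:ℝ))⁻¹ = -((Mm:ℝ) + (Mp:ℝ))⁻¹ := by
      rw [show (-(Mm:ℝ) - (Mp:ℝ)) = -((Mm:ℝ) + (Mp:ℝ)) from by ring, ← neg_inv]
    rw [h1]
    field_simp
    linear_combination (((Mp:ℝ) - ζ) * B * ((Mp:ℝ) + (Mm:ℝ)) + (-(B*ζ) + B*ζ*(Mp:ℝ) + B*ζ*(Mm:ℝ) + B*(Mp:ℝ) - B*(Mp:ℝ)*(Mm:ℝ) - B*(Mp:ℝ)^2)) * hc2 + (B*ζ + B*(Mm:ℝ)) * mul_inv_cancel₀ hMne2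
  -- conclude
  intro ξ hb1ne
  have hb0e : b0.eval ξ = c * b1.eval ξ := by rw [hb0b1]; simp
  have hae : c * a0.eval ξ + a1.eval ξ = b1.eval ξ := by
    have := congrArg (Polynomial.eval ξ) haa
    simpa using this
  rw [hb0e]
  have hcb1 : c * b1.eval ξ ≠ 0 := mul_ne_zero hcne hb1ne
  field_simp
  linear_combination (-(a0.eval ξ * b1.eval ξ)) * hc2 + (c * b1.eval ξ) * hae + ((1 - b1.eval ξ) * (-(a0.eval ξ))) * hc2 + ((1 - b1.eval ξ) * c) * hae
end

section
/- Assume -M₋ ≤ 0 < 1 ≤ M₊ and M := M₋+M₊ ≥ 2. Then both weight-functions of the 1-level subdivision are strictly between 0 and 1 on an open interval containing ξ = 1/2: there exist ξ⁻ < 1/2 < ξ⁺ such that 0 < σ₀(ξ) < 1 and 0 < σ₁(ξ) < 1 for all ξ ∈ (ξ⁻, ξ⁺). In particular σ₀(1/2) ∈ (0,1) and σ₁(1/2) ∈ (0,1). -/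
open intervalIntegral Polynomial

noncomputable def antider (p : Polynomial ℝ) : Polynomial ℝ :=
  p.sum fun n a => C (a / (n + 1)) * X ^ (n + 1)

lemma deriv_antider (p : Polynomial ℝ) : derivative (antider p) = p := by
  have : derivative (antider p) = ∑ n ∈ p.support, C (p.coeff n) * X ^ n := by
    rw [antider, Polynomial.sum_def, derivative_sum]
    refine Finset.sum_congr rfl fun n _ => ?_
    have hn : (n : ℝ) + 1 ≠ 0 := by positivity
    rw [derivative_C_mul, derivative_X_pow]
    push_cast
    rw [← mul_assoc, ← C_mul, div_mul_cancel₀ _ hn]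
  rw [this]
  conv_rhs => rw [← Polynomial.sum_C_mul_X_pow_eq p]
  rw [Polynomial.sum_def]

lemma integral_eval_eq (P p : Polynomial ℝ) (h : derivative P = p) (u v : ℝ) :
    (∫ x in u..v, p.eval x) = P.eval v - P.eval u := by
  refine intervalIntegral.integral_eq_sub_of_hasDerivAt (f := fun x => P.eval x)
    (fun x _ => ?_) (p.continuous.intervalIntegrable u v)
  simpa [h] using P.hasDerivAt x

lemma slide_eq (p q : Polynomial ℝ)
    (h : ∀ ξ : ℝ, (∫ η in (ξ - 1 / 2)..(ξ + 1 / 2), p.eval η)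
      = ∫ η in (ξ - 1 / 2)..(ξ + 1 / 2), q.eval η) : p = q := by
  set R : Polynomial ℝ := antider p - antider q with hRdef
  have hR : ∀ x : ℝ, R.eval (x + 1) = R.eval x := by
    intro x
    have h2 := h (x + 1 / 2)
    rw [integral_eval_eq (antider p) p (deriv_antider p),
      integral_eval_eq (antider q) q (deriv_antider q)] at h2
    have e1 : x + 1 / 2 + 1 / 2 = x + 1 := by ring
    have e2 : x + 1 / 2 - 1 / 2 = x := by ring
    rw [e1, e2] at h2
    simp only [hRdef, eval_sub]
    linarith
  have hn : ∀ n : ℕ, R.eval (n : ℝ) = R.eval 0 := by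
    intro n
    induction n with
    | zero => norm_num
    | succ k ih =>
      have := hR k
      push_cast
      rw [this, ih]
  have hconst : R - C (R.eval 0) = 0 := by
    refine Polynomial.eq_zero_of_infinite_isRoot _ ?_
    refine Set.Infinite.mono ?_ (Set.infinite_range_of_injective
      (f := (Nat.cast : ℕ → ℝ)) Nat.cast_injective)
    rintro _ ⟨n, rfl⟩
    simp [Polynomial.IsRoot, hn n]
  have hd : derivative R = 0 := by
    have : R = C (R.eval 0) := by linear_combination (norm := ring_nf) hconst
    rw [this, derivative_C]
  have : p - q = 0 := by
    rw [hRdef, derivative_sub, deriv_antider, deriv_antider] at hd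
    exact hd
  exact sub_eq_zero.mp this


lemma lagrangeBasis_eq (a b l : ℤ) :
    lagrangeBasis a b l = Lagrange.basis (Finset.Icc a b) (fun k : ℤ => (k : ℝ)) l := by
  simp [lagrangeBasis, Lagrange.basis, Lagrange.basisDivisor]

lemma castInjOn (s : Finset ℤ) : Set.InjOn (fun k : ℤ => (k : ℝ)) s :=
  fun x _ y _ h => Int.cast_injective h

lemma key_identity (a b l : ℤ) (hl : l ∈ Finset.Icc a b)
    (v : ℤ → ℝ) (c : ℝ) (hc : c ≠ 0)
    (hev : ∀ n ∈ Finset.Icc a b,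
      (Lagrange.nodal (Finset.Icc a b) v).eval ((n : ℝ) + 1 / 2)
        - (Lagrange.nodal (Finset.Icc a b) v).eval ((n : ℝ) - 1 / 2)
        = if n = l then c else 0) :
    C c⁻¹ * ((Lagrange.nodal (Finset.Icc a b) v).comp (X + C (1 / 2 : ℝ))
      - (Lagrange.nodal (Finset.Icc a b) v).comp (X - C (1 / 2 : ℝ)))
      = lagrangeBasis a b l := by
  classical
  set s := Finset.Icc a b with hs
  set Q := Lagrange.nodal s v with hQ
  have hcard : 0 < s.card := Finset.card_pos.mpr ⟨l, hl⟩
  have hQp : (Q.comp (X + C (1 / 2 : ℝ))).Monic := (Lagrange.nodal_monic).comp_X_add_C _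
  have hQm : (Q.comp (X - C (1 / 2 : ℝ))).Monic := (Lagrange.nodal_monic).comp_X_sub_C _
  have hdp : (Q.comp (X + C (1 / 2 : ℝ))).natDegree = s.card := by
    rw [natDegree_comp, natDegree_X_add_C, mul_one, hQ, Lagrange.natDegree_nodal]
  have hdm : (Q.comp (X - C (1 / 2 : ℝ))).natDegree = s.card := by
    rw [show (X - C (1 / 2 : ℝ)) = X + C (-(1 / 2) : ℝ) by rw [C_neg, sub_eq_add_neg]]
    rw [natDegree_comp, natDegree_X_add_C, mul_one, hQ, Lagrange.natDegree_nodal]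
  rw [lagrangeBasis_eq]
  refine Polynomial.eq_of_degrees_lt_of_eval_index_eq (v := fun k : ℤ => (k : ℝ)) s
    (castInjOn s) ?_ ?_ ?_
  · -- degree LHS < card
    have h1 : (Q.comp (X + C (1 / 2 : ℝ)) - Q.comp (X - C (1 / 2 : ℝ))).degree
        < ((s.card : ℕ) : WithBot ℕ) := by
      have hd : (Q.comp (X + C (1 / 2 : ℝ))).degree = (Q.comp (X - C (1 / 2 : ℝ))).degree := by
        rw [Polynomial.degree_eq_natDegree hQp.ne_zero,
          Polynomial.degree_eq_natDegree hQm.ne_zero, hdp, hdm]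
      have := Polynomial.degree_sub_lt hd hQp.ne_zero
        (by rw [hQp.leadingCoeff, hQm.leadingCoeff])
      rwa [Polynomial.degree_eq_natDegree hQp.ne_zero, hdp] at this
    calc (C c⁻¹ * (Q.comp (X + C (1 / 2 : ℝ)) - Q.comp (X - C (1 / 2 : ℝ)))).degree
        ≤ (Q.comp (X + C (1 / 2 : ℝ)) - Q.comp (X - C (1 / 2 : ℝ))).degree := by
          rw [← Polynomial.smul_eq_C_mul]; exact Polynomial.degree_smul_le _ _
      _ < _ := h1
  · rw [Lagrange.degree_basis (castInjOn s) hl]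
    exact_mod_cast Nat.cast_lt.mpr (Nat.sub_lt hcard one_pos)
  · intro n hn
    have hevn := hev n hn
    rw [eval_mul, eval_C, eval_sub, eval_comp, eval_comp]
    simp only [eval_add, eval_sub, eval_X, eval_C]
    rw [hevn]
    by_cases hnl : n = l
    · subst hnl
      rw [if_pos rfl, inv_mul_cancel₀ hc, Lagrange.eval_basis_self (castInjOn s) hl]
    · rw [if_neg hnl, mul_zero]
      exact (Lagrange.eval_basis_of_ne (fun h => hnl h.symm) hn).symm

lemma repr_of_slide (a b l : ℤ) (hl : l ∈ Finset.Icc a b)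
    (v : ℤ → ℝ) (c : ℝ) (hc : c ≠ 0)
    (hev : ∀ n ∈ Finset.Icc a b,
      (Lagrange.nodal (Finset.Icc a b) v).eval ((n : ℝ) + 1 / 2)
        - (Lagrange.nodal (Finset.Icc a b) v).eval ((n : ℝ) - 1 / 2)
        = if n = l then c else 0)
    (p : Polynomial ℝ)
    (hp : ∀ ξ : ℝ, (∫ η in (ξ - 1 / 2)..(ξ + 1 / 2), p.eval η)
      = (lagrangeBasis a b l).eval ξ) :
    p = C c⁻¹ * derivative (Lagrange.nodal (Finset.Icc a b) v) := by
  set Q := Lagrange.nodal (Finset.Icc a b) v with hQ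
  apply slide_eq
  intro ξ
  rw [hp ξ, integral_eval_eq (C c⁻¹ * Q) (C c⁻¹ * derivative Q) (by rw [derivative_C_mul]),
    ← key_identity a b l hl v c hc hev]
  simp only [eval_mul, eval_C, eval_sub, eval_comp, eval_add, eval_X]
  ring

lemma left_repr (a b : ℤ) (hab : a ≤ b) (p : Polynomial ℝ)
    (hp : ∀ ξ : ℝ, (∫ η in (ξ - 1 / 2)..(ξ + 1 / 2), p.eval η)
      = (lagrangeBasis a b a).eval ξ) :
    p = C (-(Lagrange.nodal (Finset.Icc a b) (fun k => (k : ℝ) + 1 / 2)).eval ((a : ℝ) - 1 / 2))⁻¹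
      * derivative (Lagrange.nodal (Finset.Icc a b) (fun k => (k : ℝ) + 1 / 2)) := by
  set v : ℤ → ℝ := fun k => (k : ℝ) + 1 / 2 with hv
  set Q := Lagrange.nodal (Finset.Icc a b) v with hQ
  have hc : -(Q.eval ((a : ℝ) - 1 / 2)) ≠ 0 := by
    rw [neg_ne_zero, hQ, Lagrange.eval_nodal]
    rw [Finset.prod_ne_zero_iff]
    intro k hk
    have hk' := (Finset.mem_Icc.mp hk).1
    have : (a : ℝ) - 1 / 2 - v k = ((a - 1 - k : ℤ) : ℝ) := by rw [hv]; push_cast; ring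
    rw [this]
    exact_mod_cast (by omega : a - 1 - k ≠ 0)
  refine repr_of_slide a b a (Finset.mem_Icc.mpr ⟨le_refl a, hab⟩) v _ hc ?_ p hp
  intro n hn
  obtain ⟨h1, h2⟩ := Finset.mem_Icc.mp hn
  have hplus : Q.eval ((n : ℝ) + 1 / 2) = 0 := Lagrange.eval_nodal_at_node (v := v) hn
  by_cases hna : n = a
  · subst hna
    rw [if_pos rfl, hplus, zero_sub]
  · rw [if_neg hna, hplus, zero_sub, neg_eq_zero]
    have hmem : n - 1 ∈ Finset.Icc a b := Finset.mem_Icc.mpr ⟨by omega, by omega⟩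
    have : (n : ℝ) - 1 / 2 = v (n - 1) := by rw [hv]; push_cast; ring
    rw [this]
    exact Lagrange.eval_nodal_at_node hmem

lemma right_repr (a b : ℤ) (hab : a ≤ b) (p : Polynomial ℝ)
    (hp : ∀ ξ : ℝ, (∫ η in (ξ - 1 / 2)..(ξ + 1 / 2), p.eval η)
      = (lagrangeBasis a b b).eval ξ) :
    p = C ((Lagrange.nodal (Finset.Icc a b) (fun k => (k : ℝ) - 1 / 2)).eval ((b : ℝ) + 1 / 2))⁻¹
      * derivative (Lagrange.nodal (Finset.Icc a b) (fun k => (k : ℝ) - 1 / 2)) := by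
  set v : ℤ → ℝ := fun k => (k : ℝ) - 1 / 2 with hv
  set Q := Lagrange.nodal (Finset.Icc a b) v with hQ
  have hc : Q.eval ((b : ℝ) + 1 / 2) ≠ 0 := by
    rw [hQ, Lagrange.eval_nodal, Finset.prod_ne_zero_iff]
    intro k hk
    have hk' := (Finset.mem_Icc.mp hk).2
    have : (b : ℝ) + 1 / 2 - v k = ((b + 1 - k : ℤ) : ℝ) := by rw [hv]; push_cast; ring
    rw [this]
    exact_mod_cast (by omega : b + 1 - k ≠ 0)
  refine repr_of_slide a b b (Finset.mem_Icc.mpr ⟨hab, le_refl b⟩) v _ hc ?_ p hp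
  intro n hn
  obtain ⟨h1, h2⟩ := Finset.mem_Icc.mp hn
  have hminus : Q.eval ((n : ℝ) - 1 / 2) = 0 := Lagrange.eval_nodal_at_node (v := v) hn
  by_cases hnb : n = b
  · subst hnb
    rw [if_pos rfl, hminus, sub_zero]
  · rw [if_neg hnb, hminus, sub_zero]
    have hmem : n + 1 ∈ Finset.Icc a b := Finset.mem_Icc.mpr ⟨by omega, by omega⟩
    have : (n : ℝ) + 1 / 2 = v (n + 1) := by rw [hv]; push_cast; ring
    rw [this]
    exact Lagrange.eval_nodal_at_node hmem

lemma eval_deriv_nodal_prod (s : Finset ℤ) (v : ℤ → ℝ) (j : ℤ) (hj : j ∈ s) (x : ℝ)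
    (hx : x = v j) :
    (derivative (Lagrange.nodal s v)).eval x = ∏ k ∈ s.erase j, (x - v k) := by
  rw [hx, Lagrange.eval_nodal_derivative_eval_node_eq hj, Lagrange.eval_nodal]

theorem test_main (Mm Mp : ℤ)
    (hM : 2 ≤ Mm + Mp) (hMm : 0 ≤ Mm) (hMp : 1 ≤ Mp)
    (a0 b0 : Polynomial ℝ)
    (ha0 : ∀ ξ : ℝ, (∫ η in (ξ - 1 / 2)..(ξ + 1 / 2), a0.eval η)
      = (lagrangeBasis (-Mm) Mp (-Mm)).eval ξ)
    (hb0 : ∀ ξ : ℝ, (∫ η in (ξ - 1 / 2)..(ξ + 1 / 2), b0.eval η)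
      = (lagrangeBasis (-Mm) (Mp - 1) (-Mm)).eval ξ) :
    b0.eval (1 / 2) ≠ 0 ∧ a0.eval (1 / 2) / b0.eval (1 / 2) = (Mp : ℝ) / (Mm + Mp + 1) := by
  classical
  set v0 : ℤ → ℝ := fun k => (k : ℝ) + 1 / 2 with hv0
  set S : Finset ℤ := Finset.Icc (-Mm) Mp with hS
  set S0 : Finset ℤ := Finset.Icc (-Mm) (Mp - 1) with hS0
  set F0 : ℤ → ℝ := fun k => -(k : ℝ) with hF0
  set G0 : ℤ → ℝ := fun k => -(Mm : ℝ) - 1 - (k : ℝ) with hG0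
  have h0S : (0 : ℤ) ∈ S := by rw [hS, Finset.mem_Icc]; omega
  have h0S0 : (0 : ℤ) ∈ S0 := by rw [hS0, Finset.mem_Icc]; omega
  -- evaluation of a0 at 1/2
  have key : ∀ (b : ℤ), -Mm ≤ b → 0 ≤ b → ∀ p : Polynomial ℝ,
      (∀ ξ : ℝ, (∫ η in (ξ - 1 / 2)..(ξ + 1 / 2), p.eval η)
        = (lagrangeBasis (-Mm) b (-Mm)).eval ξ) →
      p.eval (1 / 2)
        = (-(∏ k ∈ Finset.Icc (-Mm) b, G0 k))⁻¹ * ∏ k ∈ (Finset.Icc (-Mm) b).erase 0, F0 k := by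
    intro b hab hb0 p hp
    have h0 : (0 : ℤ) ∈ Finset.Icc (-Mm) b := by rw [Finset.mem_Icc]; omega
    rw [left_repr (-Mm) b hab p hp, eval_mul, eval_C]
    have e1 : (Lagrange.nodal (Finset.Icc (-Mm) b) v0).eval (((-Mm : ℤ) : ℝ) - 1 / 2)
        = ∏ k ∈ Finset.Icc (-Mm) b, G0 k := by
      rw [Lagrange.eval_nodal]
      refine Finset.prod_congr rfl fun k _ => ?_
      simp only [hv0, hG0]; push_cast; ring
    have e2 : (derivative (Lagrange.nodal (Finset.Icc (-Mm) b) v0)).eval (1 / 2)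
        = ∏ k ∈ (Finset.Icc (-Mm) b).erase 0, F0 k := by
      rw [eval_deriv_nodal_prod _ v0 0 h0 (1 / 2) (by rw [hv0]; norm_num)]
      refine Finset.prod_congr rfl fun k _ => ?_
      simp only [hv0, hF0]; push_cast; ring
    rw [e1, e2]
  have E0 := key Mp (by omega) (by omega) a0 ha0
  have E0' := key (Mp - 1) (by omega) (by omega) b0 hb0
  -- set relations
  have hSin : S = insert Mp S0 := by
    ext k; simp [hS, hS0, Finset.mem_Icc, Finset.mem_insert]; omega
  have hMpS0 : Mp ∉ S0 := by rw [hS0, Finset.mem_Icc]; omega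
  have hSe : S.erase 0 = insert Mp (S0.erase 0) := by
    rw [hSin, Finset.erase_insert_of_ne (by omega : Mp ≠ 0)]
  have hMpS0e : Mp ∉ S0.erase 0 := fun h => hMpS0 (Finset.mem_of_mem_erase h)
  have hG0ne : ∀ k ∈ S0, G0 k ≠ 0 := by
    intro k hk
    have := (Finset.mem_Icc.mp hk).1
    simp only [hG0]
    have : -(Mm : ℝ) - 1 - (k : ℝ) = ((-Mm - 1 - k : ℤ) : ℝ) := by push_cast; ring
    rw [this]
    exact_mod_cast (by omega : -Mm - 1 - k ≠ 0)
  have hD0' : (∏ k ∈ S0, G0 k) ≠ 0 := Finset.prod_ne_zero_iff.mpr hG0ne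
  have hN0' : (∏ k ∈ S0.erase 0, F0 k) ≠ 0 := by
    rw [Finset.prod_ne_zero_iff]
    intro k hk
    have hk0 : k ≠ 0 := Finset.ne_of_mem_erase hk
    simp only [hF0, neg_ne_zero]
    exact_mod_cast hk0
  have hb0ne : b0.eval (1 / 2) ≠ 0 := by
    rw [E0']
    exact mul_ne_zero (inv_ne_zero (neg_ne_zero.mpr hD0')) hN0'
  refine ⟨hb0ne, ?_⟩
  have hDsplit : (∏ k ∈ S, G0 k) = G0 Mp * ∏ k ∈ S0, G0 k := by
    rw [hSin, Finset.prod_insert hMpS0]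
  have hNsplit : (∏ k ∈ S.erase 0, F0 k) = F0 Mp * ∏ k ∈ S0.erase 0, F0 k := by
    rw [hSe, Finset.prod_insert hMpS0e]
  rw [E0, E0']
  rw [show Finset.Icc (-Mm) Mp = S from rfl, show Finset.Icc (-Mm) (Mp-1) = S0 from rfl,
    hDsplit, hNsplit]
  have hGMp : G0 Mp ≠ 0 := by
    simp only [hG0]
    have : -(Mm : ℝ) - 1 - (Mp : ℝ) = ((-Mm - 1 - Mp : ℤ) : ℝ) := by push_cast; ring
    rw [this]
    exact_mod_cast (by omega : -Mm - 1 - Mp ≠ 0)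
  have hsum : (Mm : ℝ) + Mp + 1 ≠ 0 := by
    have : (Mm : ℝ) + Mp + 1 = ((Mm + Mp + 1 : ℤ) : ℝ) := by push_cast; ring
    rw [this]
    exact_mod_cast (by omega : Mm + Mp + 1 ≠ 0)
  field_simp [hG0, hF0]
  ring

theorem test_main1 (Mm Mp : ℤ)
    (hM : 2 ≤ Mm + Mp) (hMm : 0 ≤ Mm) (hMp : 1 ≤ Mp)
    (a1 b1 : Polynomial ℝ)
    (ha1 : ∀ ξ : ℝ, (∫ η in (ξ - 1 / 2)..(ξ + 1 / 2), a1.eval η)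
      = (lagrangeBasis (-Mm) Mp Mp).eval ξ)
    (hb1 : ∀ ξ : ℝ, (∫ η in (ξ - 1 / 2)..(ξ + 1 / 2), b1.eval η)
      = (lagrangeBasis (-(Mm - 1)) Mp Mp).eval ξ) :
    b1.eval (1 / 2) ≠ 0 ∧ a1.eval (1 / 2) / b1.eval (1 / 2) = ((Mm : ℝ) + 1) / (Mm + Mp + 1) := by
  classical
  set v1 : ℤ → ℝ := fun k => (k : ℝ) - 1 / 2 with hv1
  set S : Finset ℤ := Finset.Icc (-Mm) Mp with hS
  set S1 : Finset ℤ := Finset.Icc (-(Mm - 1)) Mp with hS1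
  set F1 : ℤ → ℝ := fun k => 1 - (k : ℝ) with hF1
  set G1 : ℤ → ℝ := fun k => (Mp : ℝ) + 1 - (k : ℝ) with hG1
  have key : ∀ (a : ℤ), a ≤ Mp → a ≤ 1 → ∀ p : Polynomial ℝ,
      (∀ ξ : ℝ, (∫ η in (ξ - 1 / 2)..(ξ + 1 / 2), p.eval η)
        = (lagrangeBasis a Mp Mp).eval ξ) →
      p.eval (1 / 2)
        = (∏ k ∈ Finset.Icc a Mp, G1 k)⁻¹ * ∏ k ∈ (Finset.Icc a Mp).erase 1, F1 k := by
    intro a hab ha1' p hp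
    have h1 : (1 : ℤ) ∈ Finset.Icc a Mp := by rw [Finset.mem_Icc]; omega
    rw [right_repr a Mp hab p hp, eval_mul, eval_C]
    have e1 : (Lagrange.nodal (Finset.Icc a Mp) v1).eval (((Mp : ℤ) : ℝ) + 1 / 2)
        = ∏ k ∈ Finset.Icc a Mp, G1 k := by
      rw [Lagrange.eval_nodal]
      refine Finset.prod_congr rfl fun k _ => ?_
      simp only [hv1, hG1]; push_cast; ring
    have e2 : (derivative (Lagrange.nodal (Finset.Icc a Mp) v1)).eval (1 / 2)
        = ∏ k ∈ (Finset.Icc a Mp).erase 1, F1 k := by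
      rw [eval_deriv_nodal_prod _ v1 1 h1 (1 / 2) (by simp only [hv1]; norm_num)]
      refine Finset.prod_congr rfl fun k _ => ?_
      simp only [hv1, hF1]; push_cast; ring
    rw [e1, e2]
  have E1 := key (-Mm) (by omega) (by omega) a1 ha1
  have E1' := key (-(Mm - 1)) (by omega) (by omega) b1 hb1
  have hSin : S = insert (-Mm) S1 := by
    ext k; simp [hS, hS1, Finset.mem_Icc, Finset.mem_insert]; omega
  have hmS1 : -Mm ∉ S1 := by rw [hS1, Finset.mem_Icc]; omega
  have hSe : S.erase 1 = insert (-Mm) (S1.erase 1) := by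
    rw [hSin, Finset.erase_insert_of_ne (by omega : -Mm ≠ 1)]
  have hmS1e : -Mm ∉ S1.erase 1 := fun h => hmS1 (Finset.mem_of_mem_erase h)
  have hG1ne : ∀ k ∈ S1, G1 k ≠ 0 := by
    intro k hk
    have := (Finset.mem_Icc.mp hk).2
    simp only [hG1]
    have : (Mp : ℝ) + 1 - (k : ℝ) = ((Mp + 1 - k : ℤ) : ℝ) := by push_cast; ring
    rw [this]
    exact_mod_cast (by omega : Mp + 1 - k ≠ 0)
  have hD1' : (∏ k ∈ S1, G1 k) ≠ 0 := Finset.prod_ne_zero_iff.mpr hG1ne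
  have hN1' : (∏ k ∈ S1.erase 1, F1 k) ≠ 0 := by
    rw [Finset.prod_ne_zero_iff]
    intro k hk
    have hk1 : k ≠ 1 := Finset.ne_of_mem_erase hk
    simp only [hF1, sub_ne_zero]
    exact_mod_cast (hk1 ∘ Eq.symm) ∘ (by exact_mod_cast ·)
  have hb1ne : b1.eval (1 / 2) ≠ 0 := by
    rw [E1']
    exact mul_ne_zero (inv_ne_zero hD1') hN1'
  refine ⟨hb1ne, ?_⟩
  have hDsplit : (∏ k ∈ S, G1 k) = G1 (-Mm) * ∏ k ∈ S1, G1 k := by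
    rw [hSin, Finset.prod_insert hmS1]
  have hNsplit : (∏ k ∈ S.erase 1, F1 k) = F1 (-Mm) * ∏ k ∈ S1.erase 1, F1 k := by
    rw [hSe, Finset.prod_insert hmS1e]
  rw [E1, E1']
  rw [show Finset.Icc (-Mm) Mp = S from rfl, show Finset.Icc (-(Mm - 1)) Mp = S1 from rfl,
    hDsplit, hNsplit]
  have hGm : G1 (-Mm) ≠ 0 := by
    simp only [hG1]
    have : (Mp : ℝ) + 1 - ((-Mm : ℤ) : ℝ) = ((Mp + 1 + Mm : ℤ) : ℝ) := by push_cast; ring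
    rw [this]
    exact_mod_cast (by omega : Mp + 1 + Mm ≠ 0)
  have hsum : (Mm : ℝ) + Mp + 1 ≠ 0 := by
    have : (Mm : ℝ) + Mp + 1 = ((Mm + Mp + 1 : ℤ) : ℝ) := by push_cast; ring
    rw [this]
    exact_mod_cast (by omega : Mm + Mp + 1 ≠ 0)
  field_simp [hG1, hF1]
  simp only [hF1, hG1]; push_cast; ring


/-- if `-M₋ ≤ 0 < 1 ≤ M₊` and `M = M₋+M₊ ≥ 2`, both weight-functions of the
1-level subdivision are strictly between 0 and 1 on an open interval around `ξ = 1/2`;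
in particular `σ₀(1/2), σ₁(1/2) ∈ (0,1)`. Here `σ₀ = a0/b0`, `σ₁ = a1/b1` with
`a0 = α_R^{(M₋,M₊)}_{-M₋}`, `a1 = α_R^{(M₋,M₊)}_{M₊}`, `b0 = α_R^{(M₋,M₊-1)}_{-M₋}`,
`b1 = α_R^{(M₋-1,M₊)}_{M₊}`. -/
theorem reconstruction_weight_convexity_near_half (Mm Mp : ℤ)
    (hM : 2 ≤ Mm + Mp) (hMm : 0 ≤ Mm) (hMp : 1 ≤ Mp)
    (a0 a1 b0 b1 : Polynomial ℝ)
    (ha0deg : a0.degree ≤ ((Mm + Mp).toNat : ℕ))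
    (ha0 : ∀ ξ : ℝ, (∫ η in (ξ - 1 / 2)..(ξ + 1 / 2), a0.eval η)
      = (lagrangeBasis (-Mm) Mp (-Mm)).eval ξ)
    (ha1deg : a1.degree ≤ ((Mm + Mp).toNat : ℕ))
    (ha1 : ∀ ξ : ℝ, (∫ η in (ξ - 1 / 2)..(ξ + 1 / 2), a1.eval η)
      = (lagrangeBasis (-Mm) Mp Mp).eval ξ)
    (hb0deg : b0.degree ≤ ((Mm + Mp - 1).toNat : ℕ))
    (hb0 : ∀ ξ : ℝ, (∫ η in (ξ - 1 / 2)..(ξ + 1 / 2), b0.eval η)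
      = (lagrangeBasis (-Mm) (Mp - 1) (-Mm)).eval ξ)
    (hb1deg : b1.degree ≤ ((Mm + Mp - 1).toNat : ℕ))
    (hb1 : ∀ ξ : ℝ, (∫ η in (ξ - 1 / 2)..(ξ + 1 / 2), b1.eval η)
      = (lagrangeBasis (-(Mm - 1)) Mp Mp).eval ξ) :
    (∃ ξm ξp : ℝ, ξm < 1 / 2 ∧ 1 / 2 < ξp ∧
      ∀ ξ ∈ Set.Ioo ξm ξp,
        (0 < a0.eval ξ / b0.eval ξ ∧ a0.eval ξ / b0.eval ξ < 1) ∧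
        (0 < a1.eval ξ / b1.eval ξ ∧ a1.eval ξ / b1.eval ξ < 1)) ∧
    (a0.eval (1 / 2) / b0.eval (1 / 2) ∈ Set.Ioo (0 : ℝ) 1 ∧
     a1.eval (1 / 2) / b1.eval (1 / 2) ∈ Set.Ioo (0 : ℝ) 1) := by

  obtain ⟨hb0ne, hval0⟩ := test_main Mm Mp hM hMm hMp a0 b0 ha0 hb0
  obtain ⟨hb1ne, hval1⟩ := test_main1 Mm Mp hM hMm hMp a1 b1 ha1 hb1
  have hMmR : (0 : ℝ) ≤ (Mm : ℝ) := by exact_mod_cast hMm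
  have hMpR : (1 : ℝ) ≤ (Mp : ℝ) := by exact_mod_cast hMp
  have hpos : (0 : ℝ) < (Mm : ℝ) + Mp + 1 := by linarith
  have h00 : a0.eval (1 / 2) / b0.eval (1 / 2) ∈ Set.Ioo (0 : ℝ) 1 := by
    rw [hval0]
    constructor
    · apply div_pos (by linarith) hpos
    · rw [div_lt_one hpos]; linarith
  have h11 : a1.eval (1 / 2) / b1.eval (1 / 2) ∈ Set.Ioo (0 : ℝ) 1 := by
    rw [hval1]
    constructor
    · apply div_pos (by linarith) hpos
    · rw [div_lt_one hpos]; linarith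
  have hc0 : ContinuousAt (fun ξ => a0.eval ξ / b0.eval ξ) (1 / 2) :=
    (a0.continuous.continuousAt).div (b0.continuous.continuousAt) hb0ne
  have hc1 : ContinuousAt (fun ξ => a1.eval ξ / b1.eval ξ) (1 / 2) :=
    (a1.continuous.continuousAt).div (b1.continuous.continuousAt) hb1ne
  have hnhds : ((fun ξ => a0.eval ξ / b0.eval ξ) ⁻¹' Set.Ioo 0 1
      ∩ (fun ξ => a1.eval ξ / b1.eval ξ) ⁻¹' Set.Ioo 0 1) ∈ nhds (1 / 2 : ℝ) :=
    Filter.inter_mem (hc0.preimage_mem_nhds (isOpen_Ioo.mem_nhds h00))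
      (hc1.preimage_mem_nhds (isOpen_Ioo.mem_nhds h11))
  obtain ⟨l, u, ⟨hl, hu⟩, hsub⟩ := mem_nhds_iff_exists_Ioo_subset.mp hnhds
  refine ⟨⟨l, u, hl, hu, fun ξ hξ => ?_⟩, h00, h11⟩
  obtain ⟨hm0, hm1⟩ := hsub hξ
  exact ⟨⟨hm0.1, hm0.2⟩, ⟨hm1.1, hm1.2⟩⟩
end
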